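/- arXiv:2210.01334 — 6 statements merged into one kernel-verified Lean document; each statement's English description precedes it below -/
import Mathlib

section
/- Let φ : (0,S] → [0,∞) be left-continuous and nondecreasing with lim_{h→0⁺} φ(h) = 0, and suppose there is a nondecreasing continuous λ : (0,S] → [0,∞) with λ(h) ≤ 1/8 for all h and φ(h) ≤ λ(h) + φ(h)² for all h ∈ (0,S]. Assume moreover that for every h ∈ (0,S] the right limit of φ at h satisfies lim_{δ→0⁺} φ(h+δ) ≤ 2·φ(h) (relative jumps bounded by factor 2). Then φ(h) ≤ 2λ(h) for all h ∈ (0,S]. -/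
open Set Filter Topology

lemma quad_key (l x : ℝ) (hl0 : 0 ≤ l) (hl : l ≤ 1/8)
    (hq : x ≤ l + x ^ 2) (hx : x < 3/4) : x ≤ 2 * l := by
  by_contra hc
  push_neg at hc
  nlinarith [mul_pos (by linarith : (0:ℝ) < x - 2*l) (by linarith : (0:ℝ) < 3/4 - x),
    mul_nonneg (by linarith : (0:ℝ) ≤ 1/8 - l) (by nlinarith : (0:ℝ) ≤ x)]

/-- Dichotomy argument for the quadratic inequality `φ ≤ λ + φ²`:
if `φ : (0,S] → [0,∞)` is left-continuous, nondecreasing, tends to `0` at `0⁺`,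
has right limits with relative jump factor at most `2`, `lam` is nondecreasing,
continuous, `0 ≤ lam ≤ 1/8`, and `φ h ≤ lam h + (φ h)²` on `(0,S]`,
then `φ h ≤ 2 * lam h` on `(0,S]`. -/
theorem quadratic_dichotomy_bound
    (S : ℝ) (hS : 0 < S) (φ lam : ℝ → ℝ)
    (hφ_nonneg : ∀ h ∈ Ioc (0:ℝ) S, 0 ≤ φ h)
    (hφ_mono : MonotoneOn φ (Ioc (0:ℝ) S))
    (hφ_leftcont : ∀ h ∈ Ioc (0:ℝ) S, Tendsto φ (nhdsWithin h (Ioo (0:ℝ) h)) (nhds (φ h)))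
    (hφ_zero : Tendsto φ (nhdsWithin 0 (Ioi (0:ℝ))) (nhds 0))
    (hφ_rightlim : ∀ h ∈ Ioc (0:ℝ) S,
      ∃ L : ℝ, Tendsto φ (nhdsWithin h (Ioi h)) (nhds L) ∧ L ≤ 2 * φ h)
    (hlam_nonneg : ∀ h ∈ Ioc (0:ℝ) S, 0 ≤ lam h)
    (hlam_mono : MonotoneOn lam (Ioc (0:ℝ) S))
    (hlam_cont : ContinuousOn lam (Ioc (0:ℝ) S))
    (hlam_le : ∀ h ∈ Ioc (0:ℝ) S, lam h ≤ 1 / 8)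
    (hquad : ∀ h ∈ Ioc (0:ℝ) S, φ h ≤ lam h + (φ h) ^ 2) :
    ∀ h ∈ Ioc (0:ℝ) S, φ h ≤ 2 * lam h := by
  -- The dichotomy: any value φ h with φ h < 3/4 satisfies φ h ≤ 2 lam h (≤ 1/4).
  have key : ∀ h ∈ Ioc (0:ℝ) S, φ h < 3/4 → φ h ≤ 2 * lam h := fun h hh hlt =>
    quad_key (lam h) (φ h) (hlam_nonneg h hh) (hlam_le h hh) (hquad h hh) hlt
  -- main claim: φ never reaches 3/4
  have claim : ∀ h ∈ Ioc (0:ℝ) S, φ h < 3/4 := by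
    by_contra hcl
    push_neg at hcl
    obtain ⟨h₀, hh₀, hge⟩ := hcl
    set A : Set ℝ := {h | h ∈ Ioc (0:ℝ) S ∧ 3/4 ≤ φ h} with hA
    have hAne : A.Nonempty := ⟨h₀, hh₀, hge⟩
    have hAbdd : BddBelow A := ⟨0, fun a ha => le_of_lt ha.1.1⟩
    set t : ℝ := sInf A with ht
    -- smallness near 0 : there is ε > 0 with φ x < 3/4 on (0, ε)
    have hev : ∀ᶠ x in nhdsWithin 0 (Ioi (0:ℝ)), φ x < 3/4 :=
      hφ_zero.eventually_lt_const (by norm_num)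
    obtain ⟨ε, hε, hεsmall⟩ : ∃ ε > 0, ∀ x ∈ Ioo (0:ℝ) ε, φ x < 3/4 := by
      rw [eventually_nhdsWithin_iff, Metric.eventually_nhds_iff] at hev
      obtain ⟨ε, hε, hball⟩ := hev
      exact ⟨ε, hε, fun x hx => hball (by
        rw [Real.dist_eq, sub_zero, abs_of_pos hx.1]; exact hx.2) hx.1⟩
    -- t is positive and ≤ S
    have htpos : 0 < t := lt_of_lt_of_le hε (le_csInf hAne (fun a ha => by
      by_contra hlt
      push_neg at hlt
      exact absurd ha.2 (not_le.mpr (hεsmall a ⟨ha.1.1, hlt⟩))))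
    have htS : t ≤ S := csInf_le_of_le hAbdd ⟨hh₀, hge⟩ hh₀.2
    have htIoc : t ∈ Ioc (0:ℝ) S := ⟨htpos, htS⟩
    -- below t, φ is small
    have hbelow : ∀ x ∈ Ioo (0:ℝ) t, φ x ≤ 1/4 := by
      intro x hx
      have hxIoc : x ∈ Ioc (0:ℝ) S := ⟨hx.1, hx.2.le.trans htS⟩
      have hxA : x ∉ A := fun hmem => absurd (csInf_le hAbdd hmem) (not_le.mpr hx.2)
      have : φ x < 3/4 := by
        by_contra hge'
        exact hxA ⟨hxIoc, le_of_not_gt hge'⟩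
      calc φ x ≤ 2 * lam x := key x hxIoc this
        _ ≤ 2 * (1/8) := by linarith [hlam_le x hxIoc]
        _ = 1/4 := by norm_num
    -- left-continuity gives φ t ≤ 1/4
    have hne : (nhdsWithin t (Ioo (0:ℝ) t)).NeBot := by
      rw [nhdsWithin_Ioo_eq_nhdsLT htpos]
      infer_instance
    have hφt : φ t ≤ 1/4 := by
      refine le_of_tendsto (hφ_leftcont t htIoc) ?_
      filter_upwards [eventually_mem_nhdsWithin] with x hx using hbelow x hx
    -- t < S (otherwise A = {S} but φ S = φ t ≤ 1/4)
    have htltS : t < S := by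
      rcases lt_or_eq_of_le htS with h | h
      · exact h
      · exfalso
        have : h₀ = S := le_antisymm hh₀.2 (h ▸ csInf_le hAbdd ⟨hh₀, hge⟩)
        have : φ h₀ ≤ 1/4 := this ▸ h ▸ hφt
        linarith
    -- right limit at t
    obtain ⟨L, hLtend, hLle⟩ := hφ_rightlim t htIoc
    -- above t (within (t,S]), φ ≥ 3/4
    have habove : ∀ x ∈ Ioo t S, 3/4 ≤ φ x := by
      intro x hx
      obtain ⟨a, haA, hax⟩ := (csInf_lt_iff hAbdd hAne).mp hx.1
      calc (3/4 : ℝ) ≤ φ a := haA.2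
        _ ≤ φ x := hφ_mono haA.1 ⟨htpos.trans hx.1, hx.2.le⟩ hax.le
    have hL : 3/4 ≤ L := by
      refine ge_of_tendsto hLtend ?_
      filter_upwards [Ioo_mem_nhdsGT_of_mem ⟨le_refl t, htltS⟩] with x hx
        using habove x hx
    linarith
  intro h hh
  exact key h hh (claim h hh)
end

section
/- If φ : [0,T] → V is γ-Hölder continuous on [0,T] and h ∈ (0,T], then the Hölder seminorm of φ on the whole interval satisfies ‖φ‖_{γ,[0,T]} ≤ ‖φ‖_{γ;h} · (⌊T/h⌋ + 1)^{1−γ}, where ‖φ‖_{γ;h} := sup over subintervals [s,t] ⊆ [0,T] with t − s ≤ h of the γ-Hölder seminorm of φ on [s,t]. -/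
/-!
Cut `[s, t]` into `N = ⌊T/h⌋ + 1` pieces of equal length `(t - s)/N`, which is at most `h`
because `t - s ≤ T < N h`. Telescoping and the local bound give
`‖φ t - φ s‖ ≤ N · C ((t - s)/N)^γ = C N^(1-γ) (t - s)^γ`.
-/

open Finset

lemma sub_eq_sum_range_uniform_partition {G : Type*} [AddCommGroup G] (φ : ℝ → G) (s t : ℝ)
    {N : ℕ} (hN : N ≠ 0) :
    φ t - φ s =
      ∑ i ∈ range N, (φ (s + (i + 1) * ((t - s) / N)) - φ (s + i * ((t - s) / N))) := by
  have htelescope := sum_range_sub (fun i : ℕ ↦ φ (s + i * ((t - s) / N))) N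
  push_cast at htelescope
  rw [htelescope]
  congr 2
  · field_simp
    ring
  · simp

lemma natCast_mul_rpow_div (N : ℕ) (hN : N ≠ 0) (C γ : ℝ) {x : ℝ} (hx : 0 ≤ x) :
    N * (C * (x / N) ^ γ) = C * (N : ℝ) ^ (1 - γ) * x ^ γ := by
  have hNpos : (0 : ℝ) < N := by positivity
  rw [Real.div_rpow hx hNpos.le, Real.rpow_sub hNpos, Real.rpow_one]
  field_simp

theorem norm_sub_le_of_holder_on_uniform_partition {E : Type*} [SeminormedAddCommGroup E]
    {φ : ℝ → E} {C γ s t : ℝ} {N : ℕ} (hN : N ≠ 0) (hst : s ≤ t)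
    (hloc : ∀ u v, s ≤ u → u ≤ v → v ≤ t → v - u ≤ (t - s) / N →
      ‖φ v - φ u‖ ≤ C * (v - u) ^ γ) :
    ‖φ t - φ s‖ ≤ C * (N : ℝ) ^ (1 - γ) * (t - s) ^ γ := by
  set δ := (t - s) / N with hδ
  have hNpos : (0 : ℝ) < N := by positivity
  have hδ0 : 0 ≤ δ := div_nonneg (sub_nonneg.2 hst) hNpos.le
  have hpiece : ∀ i ∈ range N, ‖φ (s + (i + 1) * δ) - φ (s + i * δ)‖ ≤ C * δ ^ γ := by
    intro i hi
    have hiN : (i : ℝ) + 1 ≤ N := by exact_mod_cast mem_range.1 hi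
    have hNδ : N * δ = t - s := by rw [hδ]; field_simp
    have hlen : s + (i + 1) * δ - (s + i * δ) = δ := by ring
    have := hloc (s + i * δ) (s + (i + 1) * δ) (by nlinarith) (by nlinarith) (by nlinarith)
      hlen.le
    rwa [hlen] at this
  calc ‖φ t - φ s‖
      ≤ ∑ i ∈ range N, ‖φ (s + (i + 1) * δ) - φ (s + i * δ)‖ := by
        rw [sub_eq_sum_range_uniform_partition φ s t hN]
        exact norm_sum_le _ _
    _ ≤ ∑ _i ∈ range N, C * δ ^ γ := sum_le_sum hpiece
    _ = C * (N : ℝ) ^ (1 - γ) * (t - s) ^ γ := by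
        rw [sum_const, card_range, nsmul_eq_mul, hδ,
          natCast_mul_rpow_div N hN C γ (sub_nonneg.2 hst)]

theorem holder_seminorm_subinterval_bound_general
    {V : Type*} [NormedAddCommGroup V]
    (T h γ : ℝ) (hh0 : 0 < h)
    (φ : ℝ → V) (C : ℝ)
    (hloc : ∀ s t : ℝ, 0 ≤ s → s ≤ t → t ≤ T → t - s ≤ h →
      ‖φ t - φ s‖ ≤ C * (t - s) ^ γ) :
    ∀ s t : ℝ, 0 ≤ s → s ≤ t → t ≤ T →
      ‖φ t - φ s‖ ≤ C * ((⌊T / h⌋₊ : ℝ) + 1) ^ (1 - γ) * (t - s) ^ γ := by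
  intro s t hs hst htT
  have hTN : T < (⌊T / h⌋₊ + 1 : ℕ) * h := by
    rw [← div_lt_iff₀ hh0]
    push_cast
    exact Nat.lt_floor_add_one _
  have hpiece : (t - s) / (⌊T / h⌋₊ + 1 : ℕ) ≤ h := by
    rw [div_le_iff₀ (by positivity), mul_comm]
    linarith
  have := norm_sub_le_of_holder_on_uniform_partition (N := ⌊T / h⌋₊ + 1) (φ := φ)
    (Nat.succ_ne_zero _) hst fun u v hsu huv hvt hvu ↦
      hloc u v (hs.trans hsu) huv (hvt.trans htT) (hvu.trans hpiece)
  exact_mod_cast this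

/-- If `φ : [0,T] → V` satisfies the `γ`-Hölder bound with constant `C` on every
subinterval of length at most `h`, then on the whole of `[0,T]` it satisfies the
`γ`-Hölder bound with constant `C * (⌊T/h⌋ + 1)^(1-γ)`.  This expresses
`‖φ‖_{γ,[0,T]} ≤ ‖φ‖_{γ;h} · (⌊T/h⌋ + 1)^{1-γ}`. -/
theorem holder_seminorm_subinterval_bound
    {V : Type*} [NormedAddCommGroup V] [NormedSpace ℝ V]
    (T h γ : ℝ) (hT : 0 < T) (hh0 : 0 < h) (hhT : h ≤ T)
    (hγ0 : 0 < γ) (hγ1 : γ ≤ 1)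
    (φ : ℝ → V) (C : ℝ) (hC : 0 ≤ C)
    (hloc : ∀ s t : ℝ, 0 ≤ s → s ≤ t → t ≤ T → t - s ≤ h →
      ‖φ t - φ s‖ ≤ C * (t - s) ^ γ) :
    ∀ s t : ℝ, 0 ≤ s → s ≤ t → t ≤ T →
      ‖φ t - φ s‖ ≤ C * ((⌊T / h⌋₊ : ℝ) + 1) ^ (1 - γ) * (t - s) ^ γ :=
  holder_seminorm_subinterval_bound_general T h γ hh0 φ C hloc
end

section
/- Let 1/3 < α ≤ 1/2 and let X = (X¹, X²) be an α-Hölder rough path over V on [a,b], and (Y, Y†, Y♯) a controlled path with respect to X with values in L(V,W). Then the compensated Riemann sums J_{s,t}(𝒫) = Σᵢ (Y_{t_{i-1}} X¹_{t_{i-1},t_i} + Y†_{t_{i-1}} X²_{t_{i-1},t_i}) over partitions 𝒫 of [s,t] converge as the mesh tends to 0, defining the rough integral ∫ₛᵗ Y dX; moreover |∫ₛᵗ Y dX − (Y_s X¹_{s,t} + Y†_s X²_{s,t})| ≤ κ_α (t−s)^{3α} (‖Y♯‖_{2α,[a,b]} ‖X¹‖_{α,[a,b]} + ‖Y†‖_{α,[a,b]}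 ‖X²‖_{2α,[a,b]}), where κ_α = 2^{3α} ζ(3α). -/
/-!
The germ `Ξ_{u,v} = Y_u X¹_{u,v} + Y†_u X²_{u,v}` is almost additive: by Chen's relations and
the controlled-path relation,
`Ξ_{s,u} + Ξ_{u,t} - Ξ_{s,t} = Y♯_{s,u} X¹_{u,t} + (Y†_u - Y†_s) X²_{u,t} = O((t - s)^{3α})`
with `3α > 1`, and this is all the sewing lemma needs. In a partition of `[s, t]` into `N ≥ 2`
intervals some point has its two neighbours within `2(t - s)/(N - 1)` of each other; removing it
changes the compensated Riemann sum by at most `C (2(t - s)/(N - 1))^{3α}`, and removing points one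
at a time down to `{s, t}` gives `|J(𝒫) - Ξ_{s,t}| ≤ C 2^{3α} ζ(3α) (t - s)^{3α}`. Applied on each
interval of a partition inside a common refinement of two partitions of mesh `≤ δ`, this shows
that their sums differ by `O(δ^{3α - 1})`, so the sums converge as the mesh tends to `0`.
-/

open Filter Finset Topology

section Sewing

variable {W : Type*}

/-- Only `p 0, …, p N` enter: a partition of `[s, t]` is a monotone `p` with `p 0 = s`,
`p N = t`. -/
noncomputable def riemannSum [AddCommMonoid W] (Ξ : ℝ → ℝ → W) (N : ℕ) (p : ℕ → ℝ) : W :=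
  ∑ i ∈ range N, Ξ (p i) (p (i + 1))

/-- `2^θ ζ(θ)`, the paper's `κ_α` for `θ = 3α`. -/
noncomputable def sewingConstant (θ : ℝ) : ℝ :=
  2 ^ θ * ∑' n : ℕ, 1 / ((n : ℝ) + 1) ^ θ

def AlmostAdditiveOn [SeminormedAddCommGroup W] (Ξ : ℝ → ℝ → W) (a b C θ : ℝ) : Prop :=
  ∀ s u t, a ≤ s → s ≤ u → u ≤ t → t ≤ b → ‖Ξ s u + Ξ u t - Ξ s t‖ ≤ C * (t - s) ^ θ

def Refines (M : ℕ) (q : ℕ → ℝ) (N : ℕ) (p : ℕ → ℝ) : Prop :=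
  ∃ σ : ℕ → ℕ, Monotone σ ∧ σ 0 = 0 ∧ σ N = M ∧ ∀ j ≤ N, q (σ j) = p j

/-- The partition of `[s, t]` into `n + 1` intervals of equal length. -/
noncomputable def uniformPartition (s t : ℝ) (n i : ℕ) : ℝ :=
  s + i * ((t - s) / (n + 1))

theorem uniformPartition_monotone {s t : ℝ} (hst : s ≤ t) (n : ℕ) :
    Monotone (uniformPartition s t n) := fun i j hij => by
  have : 0 ≤ (t - s) / (n + 1) := div_nonneg (sub_nonneg.2 hst) (by positivity)
  unfold uniformPartition
  gcongr

@[simp]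
theorem uniformPartition_zero (s t : ℝ) (n : ℕ) : uniformPartition s t n 0 = s := by
  simp [uniformPartition]

@[simp]
theorem uniformPartition_last (s t : ℝ) (n : ℕ) : uniformPartition s t n (n + 1) = t := by
  unfold uniformPartition
  push_cast
  field_simp
  ring

theorem uniformPartition_succ_sub (s t : ℝ) (n k : ℕ) :
    uniformPartition s t n (k + 1) - uniformPartition s t n k = (t - s) / (n + 1) := by
  unfold uniformPartition
  push_cast
  ring

theorem tendsto_div_add_one_rpow_atTop (c : ℝ) {γ : ℝ} (hγ : 0 < γ) :
    Tendsto (fun n : ℕ => (c / (n + 1)) ^ γ) atTop (𝓝 0) := by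
  simpa [Function.comp_def, Real.zero_rpow hγ.ne'] using
    ((tendsto_const_div_atTop_nhds_zero_nat c).comp (tendsto_add_atTop_nat 1)).rpow_const
      (Or.inr hγ.le)

theorem riemannSum_eq_riemannSum_skip_add [AddCommGroup W] (Ξ : ℝ → ℝ → W) (p : ℕ → ℝ)
    (j m : ℕ) :
    riemannSum Ξ (j + m + 2) p
      = riemannSum Ξ (j + m + 1) (fun k => p (if k ≤ j then k else k + 1))
        + (Ξ (p j) (p (j + 1)) + Ξ (p (j + 1)) (p (j + 2)) - Ξ (p j) (p (j + 2))) := by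
  have hhead : ∑ i ∈ range j, Ξ (p (if i ≤ j then i else i + 1))
      (p (if i + 1 ≤ j then i + 1 else i + 1 + 1)) = ∑ i ∈ range j, Ξ (p i) (p (i + 1)) :=
    sum_congr rfl fun i hi => by
      rw [mem_range] at hi
      rw [if_pos (by omega), if_pos (by omega)]
  have htail : ∑ x ∈ range m, Ξ (p (if j + 1 + x ≤ j then j + 1 + x else j + 1 + x + 1))
      (p (if j + 1 + x + 1 ≤ j then j + 1 + x + 1 else j + 1 + x + 1 + 1))
      = ∑ x ∈ range m, Ξ (p (j + 2 + x)) (p (j + 2 + x + 1)) :=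
    sum_congr rfl fun x _ => by
      rw [if_neg (by omega), if_neg (by omega)]
      ring_nf
  rw [riemannSum, riemannSum, show j + m + 2 = j + 2 + m by omega,
    show j + m + 1 = j + 1 + m by omega, sum_range_add _ (j + 2), sum_range_add _ (j + 1),
    sum_range_succ _ (j + 1), sum_range_succ _ j, sum_range_succ _ j, hhead, htail,
    if_pos le_rfl, if_neg (by omega)]
  abel

theorem exists_add_two_sub_le {p : ℕ → ℝ} (hp : Monotone p) (n : ℕ) :
    ∃ j ≤ n, p (j + 2) - p j ≤ 2 * (p (n + 2) - p 0) / (n + 1) := by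
  have htel : ∑ j ∈ range (n + 1), (p (j + 2) - p j) = (p (n + 2) - p 1) + (p (n + 1) - p 0) := by
    rw [← sum_range_sub (fun j => p (j + 1)), ← sum_range_sub p, ← sum_add_distrib]
    exact sum_congr rfl fun j _ => by ring
  have hsum : ∑ j ∈ range (n + 1), (p (j + 2) - p j)
      ≤ ∑ _j ∈ range (n + 1), 2 * (p (n + 2) - p 0) / (n + 1) := by
    rw [htel, sum_const, card_range, nsmul_eq_mul, Nat.cast_succ,
      mul_div_cancel₀ _ (by positivity)]
    linarith [hp (zero_le_one' ℕ), hp (n + 1).le_succ]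
  obtain ⟨j, hj, hle⟩ := exists_le_of_sum_le ⟨0, by simp⟩ hsum
  exact ⟨j, Nat.lt_succ_iff.1 (mem_range.1 hj), hle⟩

theorem sum_fin_eq_riemannSum [AddCommMonoid W] (Ξ : ℝ → ℝ → W) {N : ℕ} (p : Fin (N + 1) → ℝ) :
    ∑ i : Fin N, Ξ (p i.castSucc) (p i.succ) = riemannSum Ξ N (fun n => p (Fin.clamp n N)) := by
  rw [riemannSum, ← Fin.sum_univ_eq_sum_range]
  refine sum_congr rfl fun i _ => ?_
  congr 2 <;> ext <;> simp [Fin.coe_clamp, i.is_lt.le, Nat.succ_le_of_lt i.is_lt]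

theorem rpow_le_rpow_sub_one_mul {x m γ : ℝ} (hx : 0 ≤ x) (hxm : x ≤ m) (hγ : 1 ≤ γ) :
    x ^ γ ≤ m ^ (γ - 1) * x := by
  calc x ^ γ = x ^ (γ - 1) * x := by
        rw [← Real.rpow_add_one' hx (by linarith), sub_add_cancel]
    _ ≤ m ^ (γ - 1) * x := by gcongr

theorem summable_one_div_add_one_rpow {θ : ℝ} (hθ : 1 < θ) :
    Summable fun n : ℕ => 1 / ((n : ℝ) + 1) ^ θ := by
  simpa using (summable_nat_add_iff 1).2 (Real.summable_one_div_nat_rpow.2 hθ)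

theorem sewingConstant_nonneg (θ : ℝ) : 0 ≤ sewingConstant θ :=
  mul_nonneg (by positivity) (tsum_nonneg fun _ => by positivity)

theorem sum_range_sum_Ico [AddCommMonoid W] (f : ℕ → W) {σ : ℕ → ℕ} (hσ : Monotone σ) (K : ℕ) :
    ∑ j ∈ range K, ∑ i ∈ Ico (σ j) (σ (j + 1)), f i = ∑ i ∈ Ico (σ 0) (σ K), f i := by
  induction K with
  | zero => simp
  | succ K ih =>
    rw [sum_range_succ, ih, sum_Ico_consecutive _ (hσ K.zero_le) (hσ K.le_succ)]

theorem refines_orderEmbOfFin {S : Finset ℝ} {L N : ℕ} (hS : S.card = L + 1) {p : ℕ → ℝ}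
    (hp : Monotone p) (hpS : ∀ j ≤ N, p j ∈ S) (hmin : ∀ x ∈ S, p 0 ≤ x)
    (hmax : ∀ x ∈ S, x ≤ p N) :
    Refines L (fun n => S.orderEmbOfFin hS (Fin.clamp n L)) N p := by
  set e := S.orderEmbOfFin hS
  have he0 : e 0 = p 0 := by
    rw [show (0 : Fin (L + 1)) = ⟨0, L.succ_pos⟩ from rfl, orderEmbOfFin_zero hS L.succ_pos]
    exact le_antisymm (min'_le _ _ (hpS 0 (Nat.zero_le _))) (le_min' _ _ _ hmin)
  have heL : e (Fin.last L) = p N := by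
    rw [show Fin.last L = ⟨L + 1 - 1, by omega⟩ from Fin.ext (by simp),
      orderEmbOfFin_last hS L.succ_pos]
    exact le_antisymm (max'_le _ _ _ hmax) (le_max' _ _ (hpS N le_rfl))
  set idx : ℕ → Fin (L + 1) := fun j =>
    (S.orderIsoOfFin hS).symm ⟨p (min j N), hpS _ (min_le_right _ _)⟩
  have he_idx : ∀ j, e (idx j) = p (min j N) := fun j => by
    rw [← coe_orderIsoOfFin_apply, OrderIso.apply_symm_apply]
  refine ⟨fun j => idx j, fun i j hij => (S.orderIsoOfFin hS).symm.monotone ?_, ?_, ?_, ?_⟩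
  · exact hp (min_le_min_right N hij)
  · have : idx 0 = 0 := e.injective (by rw [he_idx, he0, Nat.zero_min])
    simp [this]
  · have : idx N = Fin.last L := e.injective (by rw [he_idx, heL, min_self])
    simp [this]
  · intro j hj
    show e (Fin.clamp (idx j) L) = p j
    rw [show Fin.clamp (idx j) L = idx j from Fin.ext (by simp [Fin.coe_clamp, (idx j).is_le]),
      he_idx, min_eq_left hj]

theorem exists_common_refinement {N M : ℕ} {p q : ℕ → ℝ} (hp : Monotone p) (hq : Monotone q)
    (h0 : p 0 = q 0) (hNM : p N = q M) :
    ∃ (L : ℕ) (r : ℕ → ℝ), Monotone r ∧ Refines L r N p ∧ Refines L r M q := by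
  classical
  set S := (range (N + 1)).image p ∪ (range (M + 1)).image q
  have hp0 : p 0 ∈ S := mem_union_left _ (mem_image_of_mem p (mem_range.2 N.succ_pos))
  have hS : S.card = S.card - 1 + 1 := (Nat.sub_add_cancel (card_pos.2 ⟨p 0, hp0⟩)).symm
  have hmin : ∀ x ∈ S, p 0 ≤ x := by
    simp only [S, mem_union, mem_image]
    rintro x (⟨j, -, rfl⟩ | ⟨k, -, rfl⟩)
    · exact hp (Nat.zero_le j)
    · exact h0 ▸ hq (Nat.zero_le k)
  have hmax : ∀ x ∈ S, x ≤ p N := by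
    simp only [S, mem_union, mem_image, mem_range]
    rintro x (⟨j, hj, rfl⟩ | ⟨k, hk, rfl⟩)
    · exact hp (by omega)
    · exact hNM ▸ hq (by omega)
  refine ⟨S.card - 1, _, fun m n hmn => (S.orderEmbOfFin hS).monotone ?_,
    refines_orderEmbOfFin hS hp (fun j hj => ?_) hmin hmax,
    refines_orderEmbOfFin hS hq (fun k hk => ?_) (h0 ▸ hmin) (hNM ▸ hmax)⟩
  · exact Fin.mk_le_mk.2 (min_le_min_right _ hmn)
  · exact mem_union_left _ (mem_image_of_mem p (mem_range.2 (by omega)))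
  · exact mem_union_right _ (mem_image_of_mem q (mem_range.2 (by omega)))

namespace AlmostAdditiveOn

variable [NormedAddCommGroup W] {Ξ : ℝ → ℝ → W} {a b C θ : ℝ}

theorem norm_riemannSum_sub_le_sum (hΞ : AlmostAdditiveOn Ξ a b C θ) (hC : 0 ≤ C)
    (hθ : 0 < θ) : ∀ (N : ℕ) (p : ℕ → ℝ), Monotone p → a ≤ p 0 → p N ≤ b →
      ‖riemannSum Ξ N p - Ξ (p 0) (p N)‖
        ≤ C * (2 * (p N - p 0)) ^ θ * ∑ k ∈ range (N - 1), 1 / ((k : ℝ) + 1) ^ θ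
  | 0, p, _, ha, hb => by
    simpa [riemannSum, Real.zero_rpow hθ.ne'] using hΞ (p 0) (p 0) (p 0) ha le_rfl le_rfl hb
  | 1, p, _, _, _ => by simp [riemannSum]
  | n + 2, p, hp, ha, hb => by
    have IH := hΞ.norm_riemannSum_sub_le_sum hC hθ (n + 1)
    -- remove a point `p (j + 1)` whose neighbours are within `2 (p N - p 0) / (N - 1)`
    obtain ⟨j, hjn, hgap⟩ := exists_add_two_sub_le hp n
    obtain ⟨m, rfl⟩ := Nat.exists_eq_add_of_le hjn
    set q : ℕ → ℝ := fun k => p (if k ≤ j then k else k + 1)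
    have hq : Monotone q := fun x y hxy => hp (by split_ifs <;> omega)
    have hq0 : q 0 = p 0 := by simp [q]
    have hqN : q (j + m + 1) = p (j + m + 2) := by simp [q]
    have hrest := IH q hq (hq0 ▸ ha) (hqN ▸ hb)
    rw [hq0, hqN, show j + m + 1 - 1 = j + m by omega] at hrest
    have hdelta := hΞ (p j) (p (j + 1)) (p (j + 2)) (ha.trans (hp j.zero_le)) (hp (by omega))
      (hp (by omega)) ((hp (by omega)).trans hb)
    set L := p (j + m + 2) - p 0
    have hL : 0 ≤ L := sub_nonneg.2 (hp (Nat.zero_le _))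
    have hremoved : C * (p (j + 2) - p j) ^ θ
        ≤ C * (2 * L) ^ θ * (1 / ((↑(j + m) : ℝ) + 1) ^ θ) := by
      calc C * (p (j + 2) - p j) ^ θ ≤ C * (2 * L / ((↑(j + m) : ℝ) + 1)) ^ θ := by
            gcongr
            exact sub_nonneg.2 (hp (by omega))
        _ = C * (2 * L) ^ θ * (1 / ((↑(j + m) : ℝ) + 1) ^ θ) := by
            rw [Real.div_rpow (by positivity) (by positivity)]
            ring
    rw [riemannSum_eq_riemannSum_skip_add, add_sub_right_comm,
      show j + m + 2 - 1 = j + m + 1 by omega, sum_range_succ, mul_add]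
    exact (norm_add_le _ _).trans (add_le_add hrest (hdelta.trans hremoved))

theorem norm_riemannSum_sub_le (hΞ : AlmostAdditiveOn Ξ a b C θ) (hC : 0 ≤ C) (hθ : 1 < θ)
    {N : ℕ} {p : ℕ → ℝ} (hp : Monotone p) (ha : a ≤ p 0) (hb : p N ≤ b) :
    ‖riemannSum Ξ N p - Ξ (p 0) (p N)‖ ≤ sewingConstant θ * (p N - p 0) ^ θ * C := by
  have hL : 0 ≤ p N - p 0 := sub_nonneg.2 (hp N.zero_le)
  calc ‖riemannSum Ξ N p - Ξ (p 0) (p N)‖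
      ≤ C * (2 * (p N - p 0)) ^ θ * ∑ k ∈ range (N - 1), 1 / ((k : ℝ) + 1) ^ θ :=
        hΞ.norm_riemannSum_sub_le_sum hC (by linarith) N p hp ha hb
    _ ≤ C * (2 * (p N - p 0)) ^ θ * ∑' k : ℕ, 1 / ((k : ℝ) + 1) ^ θ := by
        gcongr
        exact Summable.sum_le_tsum _ (fun _ _ => by positivity) (summable_one_div_add_one_rpow hθ)
    _ = sewingConstant θ * (p N - p 0) ^ θ * C := by
        rw [sewingConstant, Real.mul_rpow zero_le_two hL]
        ring

theorem norm_riemannSum_sub_riemannSum_le_of_refines (hΞ : AlmostAdditiveOn Ξ a b C θ)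
    (hC : 0 ≤ C) (hθ : 1 < θ) {M N : ℕ} {q p : ℕ → ℝ} {δ : ℝ} (hq : Monotone q)
    (hqp : Refines M q N p) (ha : a ≤ p 0) (hb : p N ≤ b) (hδ : ∀ k < N, p (k + 1) - p k ≤ δ) :
    ‖riemannSum Ξ M q - riemannSum Ξ N p‖ ≤ sewingConstant θ * δ ^ (θ - 1) * (p N - p 0) * C := by
  obtain ⟨σ, hσ, hσ0, hσN, hqσ⟩ := hqp
  have hq0 : q 0 = p 0 := by simpa [hσ0] using hqσ 0 (Nat.zero_le _)
  have hqM : q M = p N := by rw [← hσN, hqσ N le_rfl]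
  have hblock : ∀ j < N, ‖∑ i ∈ Ico (σ j) (σ (j + 1)), Ξ (q i) (q (i + 1)) - Ξ (p j) (p (j + 1))‖
      ≤ sewingConstant θ * δ ^ (θ - 1) * (p (j + 1) - p j) * C := by
    intro j hj
    have hσj : σ j ≤ σ (j + 1) := hσ j.le_succ
    have hσM : σ (j + 1) ≤ M := hσN ▸ hσ hj
    have hpj : p j ≤ p (j + 1) := by
      rw [← hqσ j hj.le, ← hqσ (j + 1) hj]; exact hq hσj
    have hsub := hΞ.norm_riemannSum_sub_le hC hθ (N := σ (j + 1) - σ j)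
      (p := fun i => q (σ j + i)) (fun x y hxy => hq (by omega))
      (by simpa using (ha.trans_eq hq0.symm).trans (hq (Nat.zero_le (σ j))))
      (by simpa [Nat.add_sub_cancel' hσj] using (hq hσM).trans (hqM.trans_le hb))
    simp only [add_zero, Nat.add_sub_cancel' hσj, hqσ j hj.le, hqσ (j + 1) hj] at hsub
    rw [sum_Ico_eq_sum_range]
    calc _ ≤ sewingConstant θ * (p (j + 1) - p j) ^ θ * C := hsub
      _ ≤ sewingConstant θ * (δ ^ (θ - 1) * (p (j + 1) - p j)) * C := by
          have := sewingConstant_nonneg θ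
          gcongr
          exact rpow_le_rpow_sub_one_mul (sub_nonneg.2 hpj) (hδ j hj) hθ.le
      _ = _ := by ring
  have hsplit : riemannSum Ξ M q
      = ∑ j ∈ range N, ∑ i ∈ Ico (σ j) (σ (j + 1)), Ξ (q i) (q (i + 1)) := by
    rw [sum_range_sum_Ico _ hσ, hσ0, hσN, riemannSum, range_eq_Ico]
  calc ‖riemannSum Ξ M q - riemannSum Ξ N p‖
      = ‖∑ j ∈ range N, (∑ i ∈ Ico (σ j) (σ (j + 1)), Ξ (q i) (q (i + 1))
          - Ξ (p j) (p (j + 1)))‖ := by rw [hsplit, riemannSum, sum_sub_distrib]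
    _ ≤ ∑ j ∈ range N, sewingConstant θ * δ ^ (θ - 1) * (p (j + 1) - p j) * C :=
        norm_sum_le_of_le _ fun j hj => hblock j (mem_range.1 hj)
    _ = sewingConstant θ * δ ^ (θ - 1) * (p N - p 0) * C := by
        rw [← sum_mul, ← mul_sum, sum_range_sub]

theorem norm_riemannSum_sub_riemannSum_le (hΞ : AlmostAdditiveOn Ξ a b C θ) (hC : 0 ≤ C)
    (hθ : 1 < θ) {N M : ℕ} {p q : ℕ → ℝ} {δ₁ δ₂ : ℝ} (hp : Monotone p) (hq : Monotone q)
    (h0 : p 0 = q 0) (hNM : p N = q M) (ha : a ≤ p 0) (hb : p N ≤ b)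
    (hδ₁ : ∀ k < N, p (k + 1) - p k ≤ δ₁) (hδ₂ : ∀ k < M, q (k + 1) - q k ≤ δ₂) :
    ‖riemannSum Ξ N p - riemannSum Ξ M q‖
      ≤ sewingConstant θ * (δ₁ ^ (θ - 1) + δ₂ ^ (θ - 1)) * (p N - p 0) * C := by
  obtain ⟨L, r, hr, hrp, hrq⟩ := exists_common_refinement hp hq h0 hNM
  have hp' := hΞ.norm_riemannSum_sub_riemannSum_le_of_refines hC hθ hr hrp ha hb hδ₁
  have hq' := hΞ.norm_riemannSum_sub_riemannSum_le_of_refines hC hθ hr hrq (h0 ▸ ha) (hNM ▸ hb) hδ₂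
  rw [← h0, ← hNM] at hq'
  calc ‖riemannSum Ξ N p - riemannSum Ξ M q‖
      ≤ ‖riemannSum Ξ L r - riemannSum Ξ N p‖ + ‖riemannSum Ξ L r - riemannSum Ξ M q‖ := by
        rw [norm_sub_rev (riemannSum Ξ L r)]
        exact norm_sub_le_norm_sub_add_norm_sub _ _ _
    _ ≤ _ := add_le_add hp' hq'
    _ = _ := by ring

theorem norm_riemannSum_sub_uniformPartition_le (hΞ : AlmostAdditiveOn Ξ a b C θ) (hC : 0 ≤ C)
    (hθ : 1 < θ) {s t δ : ℝ} (has : a ≤ s) (htb : t ≤ b) {N : ℕ} {p : ℕ → ℝ} (hp : Monotone p)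
    (hp0 : p 0 = s) (hpN : p N = t) (hδ : ∀ k < N, p (k + 1) - p k ≤ δ) (n : ℕ) :
    ‖riemannSum Ξ N p - riemannSum Ξ (n + 1) (uniformPartition s t n)‖
      ≤ sewingConstant θ * (δ ^ (θ - 1) + ((t - s) / (n + 1)) ^ (θ - 1)) * (t - s) * C := by
  have hst : s ≤ t := hp0 ▸ hpN ▸ hp N.zero_le
  simpa [hp0, hpN] using hΞ.norm_riemannSum_sub_riemannSum_le hC hθ hp
    (uniformPartition_monotone hst n) (by simp [hp0]) (by simp [hpN]) (hp0 ▸ has) (hpN ▸ htb) hδ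
    (fun k _ => (uniformPartition_succ_sub s t n k).le)

theorem cauchySeq_riemannSum_uniformPartition (hΞ : AlmostAdditiveOn Ξ a b C θ) (hC : 0 ≤ C)
    (hθ : 1 < θ) {s t : ℝ} (has : a ≤ s) (hst : s ≤ t) (htb : t ≤ b) :
    CauchySeq fun n => riemannSum Ξ (n + 1) (uniformPartition s t n) := by
  set h : ℕ → ℝ := fun n => (t - s) / (n + 1)
  refine cauchySeq_of_le_tendsto_0' (fun n => sewingConstant θ * (2 * h n ^ (θ - 1)) * (t - s) * C)
    (fun n m hnm => ?_) ?_
  · have hmn : h m ^ (θ - 1) ≤ h n ^ (θ - 1) :=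
      Real.rpow_le_rpow (div_nonneg (sub_nonneg.2 hst) (by positivity))
        (div_le_div_of_nonneg_left (sub_nonneg.2 hst) (by positivity)
          (by exact_mod_cast Nat.succ_le_succ hnm))
        (by linarith)
    rw [dist_eq_norm]
    refine (hΞ.norm_riemannSum_sub_uniformPartition_le hC hθ has htb
      (uniformPartition_monotone hst n) (uniformPartition_zero s t n) (uniformPartition_last s t n)
      (fun k _ => (uniformPartition_succ_sub s t n k).le) m).trans ?_
    have := sewingConstant_nonneg θ
    gcongr
    linarith
  · simpa using ((((tendsto_div_add_one_rpow_atTop (t - s) (by linarith : 0 < θ - 1)).const_mul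
      2).const_mul (sewingConstant θ)).mul_const (t - s)).mul_const C

theorem exists_sewing [CompleteSpace W] (hΞ : AlmostAdditiveOn Ξ a b C θ) (hC : 0 ≤ C)
    (hθ : 1 < θ) {s t : ℝ} (has : a ≤ s) (hst : s ≤ t) (htb : t ≤ b) :
    ∃ I : W, ‖I - Ξ s t‖ ≤ sewingConstant θ * (t - s) ^ θ * C ∧
      ∀ (N : ℕ) (p : ℕ → ℝ) (δ : ℝ), Monotone p → p 0 = s → p N = t →
        (∀ k < N, p (k + 1) - p k ≤ δ) →
        ‖riemannSum Ξ N p - I‖ ≤ sewingConstant θ * δ ^ (θ - 1) * (t - s) * C := by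
  obtain ⟨I, hI⟩ :=
    cauchySeq_tendsto_of_complete (hΞ.cauchySeq_riemannSum_uniformPartition hC hθ has hst htb)
  refine ⟨I, le_of_tendsto (hI.sub_const _).norm (Eventually.of_forall fun n => ?_),
    fun N p δ hp hp0 hpN hδ => le_of_tendsto_of_tendsto' (tendsto_const_nhds.sub hI).norm ?_
      (hΞ.norm_riemannSum_sub_uniformPartition_le hC hθ has htb hp hp0 hpN hδ)⟩
  · simpa using hΞ.norm_riemannSum_sub_le hC hθ (uniformPartition_monotone hst n) (N := n + 1)
      (by simpa using has) (by simpa using htb)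
  · simpa using ((((tendsto_div_add_one_rpow_atTop (t - s) (by linarith : 0 < θ - 1)).const_add
      (δ ^ (θ - 1))).const_mul (sewingConstant θ)).mul_const (t - s)).mul_const C

theorem exists_sewing_fin [CompleteSpace W] (hΞ : AlmostAdditiveOn Ξ a b C θ) (hC : 0 ≤ C)
    (hθ : 1 < θ) {s t : ℝ} (has : a ≤ s) (hst : s ≤ t) (htb : t ≤ b) :
    ∃ I : W,
      (∀ ε : ℝ, 0 < ε → ∃ δ : ℝ, 0 < δ ∧
        ∀ (N : ℕ) (p : Fin (N + 1) → ℝ), Monotone p → p 0 = s → p (Fin.last N) = t →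
          (∀ i : Fin N, p i.succ - p i.castSucc < δ) →
          ‖∑ i : Fin N, Ξ (p i.castSucc) (p i.succ) - I‖ < ε)
      ∧ ‖I - Ξ s t‖ ≤ sewingConstant θ * (t - s) ^ θ * C := by
  obtain ⟨I, hI, hconv⟩ := hΞ.exists_sewing hC hθ has hst htb
  refine ⟨I, fun ε hε => ?_, hI⟩
  have hlim : Tendsto (fun δ : ℝ => sewingConstant θ * δ ^ (θ - 1) * (t - s) * C) (𝓝 0) (𝓝 0) := by
    simpa [Real.zero_rpow (by linarith : θ - 1 ≠ 0)] using
      ((((tendsto_id (x := 𝓝 (0 : ℝ))).rpow_const (Or.inr (by linarith : 0 ≤ θ - 1))).const_mul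
        (sewingConstant θ)).mul_const (t - s)).mul_const C
  obtain ⟨δ, hδ, hδpos⟩ :=
    (((hlim.eventually (gt_mem_nhds hε)).filter_mono nhdsWithin_le_nhds).and
      (self_mem_nhdsWithin (s := Set.Ioi 0) (a := 0))).exists
  refine ⟨δ, hδpos, fun N p hp hp0 hpN hmesh => ?_⟩
  rw [sum_fin_eq_riemannSum]
  refine (hconv N _ δ (fun m n hmn => hp (Fin.mk_le_mk.2 (min_le_min_right N hmn)))
    (by simpa using hp0) (by simpa [Fin.last] using hpN)
    fun k hk => (hmesh ⟨k, hk⟩).le.trans_eq' ?_).trans_lt hδ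
  congr 2 <;> ext <;> simp <;> omega

end AlmostAdditiveOn

end Sewing

section RoughIntegral

variable {V V2 W : Type*} [NormedAddCommGroup V] [NormedSpace ℝ V]
  [NormedAddCommGroup V2] [NormedSpace ℝ V2] [NormedAddCommGroup W] [NormedSpace ℝ W]

noncomputable def roughGerm (X1 : ℝ → ℝ → V) (X2 : ℝ → ℝ → V2) (Y : ℝ → V →L[ℝ] W)
    (Ydag : ℝ → V2 →L[ℝ] W) (u v : ℝ) : W :=
  Y u (X1 u v) + Ydag u (X2 u v)

variable {X1 : ℝ → ℝ → V} {X2 : ℝ → ℝ → V2} {tmul : V →L[ℝ] V →L[ℝ] V2}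
  {Y : ℝ → V →L[ℝ] W} {Ydag : ℝ → V2 →L[ℝ] W} {Ysharp : ℝ → ℝ → V →L[ℝ] W}

theorem roughGerm_self {x : ℝ} (hChen1 : X1 x x = X1 x x + X1 x x)
    (hChen2 : X2 x x = X2 x x + X2 x x + tmul (X1 x x) (X1 x x)) :
    roughGerm X1 X2 Y Ydag x x = 0 := by
  have h1 : X1 x x = 0 := left_eq_add.mp hChen1
  have h2 : X2 x x = 0 := by simpa [h1] using hChen2
  simp [roughGerm, h1, h2]

theorem roughGerm_delta {s u t : ℝ} (hChen1 : X1 s t = X1 s u + X1 u t)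
    (hChen2 : X2 s t = X2 s u + X2 u t + tmul (X1 s u) (X1 u t))
    (hCtrl : Y u - Y s = (Ydag s).comp (tmul (X1 s u)) + Ysharp s u) :
    roughGerm X1 X2 Y Ydag s u + roughGerm X1 X2 Y Ydag u t - roughGerm X1 X2 Y Ydag s t
      = Ysharp s u (X1 u t) + (Ydag u - Ydag s) (X2 u t) := by
  have hY := congrArg (· (X1 u t)) hCtrl
  simp only [sub_apply, add_apply,
    ContinuousLinearMap.comp_apply, sub_eq_iff_eq_add'] at hY
  simp only [roughGerm, hChen1, hChen2, map_add, hY, sub_apply]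
  abel

theorem norm_apply_le_mul_rpow_add {E F : Type*} [SeminormedAddCommGroup E] [NormedSpace ℝ E]
    [SeminormedAddCommGroup F] [NormedSpace ℝ F] (A : E →L[ℝ] F) (v : E)
    {c₁ c₂ x y β γ : ℝ} (hA : ‖A‖ ≤ c₁ * x ^ β) (hv : ‖v‖ ≤ c₂ * y ^ γ) (hc : 0 ≤ c₁ * c₂)
    (hx : 0 ≤ x) (hy : 0 ≤ y) (hβ : 0 ≤ β) (hγ : 0 ≤ γ) (hβγ : β + γ ≠ 0) :
    ‖A v‖ ≤ c₁ * c₂ * (x + y) ^ (β + γ) :=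
  calc ‖A v‖ ≤ ‖A‖ * ‖v‖ := A.le_opNorm v
    _ ≤ c₁ * x ^ β * (c₂ * y ^ γ) := mul_le_mul hA hv (norm_nonneg _) ((norm_nonneg _).trans hA)
    _ = c₁ * c₂ * (x ^ β * y ^ γ) := by ring
    _ ≤ c₁ * c₂ * ((x + y) ^ β * (x + y) ^ γ) := by gcongr <;> linarith
    _ = c₁ * c₂ * (x + y) ^ (β + γ) := by rw [Real.rpow_add' (by positivity) hβγ]

theorem norm_roughGerm_delta_le {α CX1 CX2 CYd CYs s u t : ℝ} (hα : 0 < α) (hsu : s ≤ u)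
    (hut : u ≤ t) (hChen1 : X1 s t = X1 s u + X1 u t)
    (hChen2 : X2 s t = X2 s u + X2 u t + tmul (X1 s u) (X1 u t))
    (hCtrl : Y u - Y s = (Ydag s).comp (tmul (X1 s u)) + Ysharp s u)
    (hX1 : ‖X1 u t‖ ≤ CX1 * (t - u) ^ α) (hX2 : ‖X2 u t‖ ≤ CX2 * (t - u) ^ (2 * α))
    (hYd : ‖Ydag u - Ydag s‖ ≤ CYd * (u - s) ^ α)
    (hYs : ‖Ysharp s u‖ ≤ CYs * (u - s) ^ (2 * α)) (h₁ : 0 ≤ CYs * CX1) (h₂ : 0 ≤ CYd * CX2) :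
    ‖roughGerm X1 X2 Y Ydag s u + roughGerm X1 X2 Y Ydag u t - roughGerm X1 X2 Y Ydag s t‖
      ≤ (CYs * CX1 + CYd * CX2) * (t - s) ^ (3 * α) := by
  have hsplit : u - s + (t - u) = t - s := by ring
  have k₁ := norm_apply_le_mul_rpow_add _ _ hYs hX1 h₁ (sub_nonneg.2 hsu) (sub_nonneg.2 hut)
    (by positivity) hα.le (by positivity)
  have k₂ := norm_apply_le_mul_rpow_add _ _ hYd hX2 h₂ (sub_nonneg.2 hsu) (sub_nonneg.2 hut)
    hα.le (by positivity) (by positivity)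
  rw [hsplit, show 2 * α + α = 3 * α by ring] at k₁
  rw [hsplit, show α + 2 * α = 3 * α by ring] at k₂
  rw [roughGerm_delta hChen1 hChen2 hCtrl]
  calc _ ≤ _ := norm_add_le _ _
    _ ≤ _ := add_le_add k₁ k₂
    _ = _ := by ring

end RoughIntegral

theorem nonneg_of_norm_le_mul_rpow {E : Type*} [SeminormedAddCommGroup E] {x : E} {C r γ : ℝ}
    (h : ‖x‖ ≤ C * r ^ γ) (hr : 0 < r) : 0 ≤ C :=
  nonneg_of_mul_nonneg_left ((norm_nonneg x).trans h) (Real.rpow_pos_of_pos hr γ)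

theorem rough_integral_exists_and_estimate_general
    {V V2 W : Type*} [NormedAddCommGroup V] [NormedSpace ℝ V]
    [NormedAddCommGroup V2] [NormedSpace ℝ V2]
    [NormedAddCommGroup W] [NormedSpace ℝ W] [CompleteSpace W]
    (a b α : ℝ) (hα1 : 1/3 < α)
    (X1 : ℝ → ℝ → V) (X2 : ℝ → ℝ → V2)
    (tmul : V →L[ℝ] V →L[ℝ] V2)
    (Y : ℝ → V →L[ℝ] W)
    (Ydag : ℝ → V2 →L[ℝ] W)
    (Ysharp : ℝ → ℝ → V →L[ℝ] W)
    (CX1 CX2 CYd CYs : ℝ)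
    -- Hölder bounds (`CX1, CX2, CYd, CYs` bound the seminorms
    -- `‖X¹‖_{α,[a,b]}, ‖X²‖_{2α,[a,b]}, ‖Y†‖_{α,[a,b]}, ‖Y♯‖_{2α,[a,b]}`)
    (hX1 : ∀ s t : ℝ, a ≤ s → s ≤ t → t ≤ b → ‖X1 s t‖ ≤ CX1 * (t - s) ^ α)
    (hX2 : ∀ s t : ℝ, a ≤ s → s ≤ t → t ≤ b → ‖X2 s t‖ ≤ CX2 * (t - s) ^ (2 * α))
    (hYd : ∀ s t : ℝ, a ≤ s → s ≤ t → t ≤ b → ‖Ydag t - Ydag s‖ ≤ CYd * (t - s) ^ α)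
    (hYs : ∀ s t : ℝ, a ≤ s → s ≤ t → t ≤ b → ‖Ysharp s t‖ ≤ CYs * (t - s) ^ (2 * α))
    -- Chen's relations
    (hChen1 : ∀ s u t : ℝ, a ≤ s → s ≤ u → u ≤ t → t ≤ b →
      X1 s t = X1 s u + X1 u t)
    (hChen2 : ∀ s u t : ℝ, a ≤ s → s ≤ u → u ≤ t → t ≤ b →
      X2 s t = X2 s u + X2 u t + tmul (X1 s u) (X1 u t))
    -- the controlled path relation `Y_t − Y_s = Y†_s X¹_{s,t} + Y♯_{s,t}`
    (hCtrl : ∀ s t : ℝ, a ≤ s → s ≤ t → t ≤ b →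
      Y t - Y s = (Ydag s).comp (tmul (X1 s t)) + Ysharp s t) :
    ∀ s t : ℝ, a ≤ s → s ≤ t → t ≤ b →
      ∃ I : W,
        -- convergence of compensated Riemann sums as the mesh tends to 0
        (∀ ε : ℝ, 0 < ε → ∃ δ : ℝ, 0 < δ ∧
          ∀ (N : ℕ) (p : Fin (N + 1) → ℝ), Monotone p →
            p 0 = s → p (Fin.last N) = t →
            (∀ i : Fin N, p i.succ - p i.castSucc < δ) →
            ‖(∑ i : Fin N,
                (Y (p i.castSucc) (X1 (p i.castSucc) (p i.succ))
                  + Ydag (p i.castSucc) (X2 (p i.castSucc) (p i.succ)))) - I‖ < ε)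
        -- the sewing estimate with `κ_α = 2^{3α} ζ(3α)`
        ∧ ‖I - (Y s (X1 s t) + Ydag s (X2 s t))‖
            ≤ (2 : ℝ) ^ (3 * α) * (∑' n : ℕ, 1 / ((n : ℝ) + 1) ^ (3 * α))
              * (t - s) ^ (3 * α) * (CYs * CX1 + CYd * CX2) := by
  intro s t hs hst ht
  have hθ : 1 < 3 * α := by linarith
  rcases hst.eq_or_lt with rfl | hst
  · have hΞ : AlmostAdditiveOn (roughGerm X1 X2 Y Ydag) s s 0 (3 * α) := by
      intro x y z hx hxy hyz hz
      rw [show x = s by linarith, show y = s by linarith, show z = s by linarith]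
      simp [roughGerm_self (hChen1 s s s hs le_rfl le_rfl ht) (hChen2 s s s hs le_rfl le_rfl ht)]
    obtain ⟨I, hconv, hI⟩ := hΞ.exists_sewing_fin le_rfl hθ le_rfl le_rfl le_rfl
    refine ⟨I, hconv, ?_⟩
    simpa [roughGerm, Real.zero_rpow (by linarith : 3 * α ≠ 0)] using hI
  -- for `s < t` the Hölder bounds force the constants to be nonnegative
  have hCX1 := nonneg_of_norm_le_mul_rpow (hX1 s t hs hst.le ht) (sub_pos.2 hst)
  have hCX2 := nonneg_of_norm_le_mul_rpow (hX2 s t hs hst.le ht) (sub_pos.2 hst)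
  have hCYd := nonneg_of_norm_le_mul_rpow (hYd s t hs hst.le ht) (sub_pos.2 hst)
  have hCYs := nonneg_of_norm_le_mul_rpow (hYs s t hs hst.le ht) (sub_pos.2 hst)
  have hΞ : AlmostAdditiveOn (roughGerm X1 X2 Y Ydag) a b (CYs * CX1 + CYd * CX2) (3 * α) :=
    fun x y z hx hxy hyz hz => norm_roughGerm_delta_le (by linarith) hxy hyz
      (hChen1 x y z hx hxy hyz hz) (hChen2 x y z hx hxy hyz hz) (hCtrl x y hx hxy (hyz.trans hz))
      (hX1 y z (hx.trans hxy) hyz hz) (hX2 y z (hx.trans hxy) hyz hz)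
      (hYd x y hx hxy (hyz.trans hz)) (hYs x y hx hxy (hyz.trans hz)) (by positivity)
      (by positivity)
  exact hΞ.exists_sewing_fin (by positivity) hθ hs hst.le ht

/-- Existence of the rough integral of a controlled path, with the standard
sewing estimate.  `X = (X¹, X²)` is an `α`-Hölder rough path over `V` on `[a,b]`
(the second level takes values in a normed space `V2` playing the role of
`V ⊗ V`, with tensor map `tmul`), and `(Y, Y†, Y♯)` is a controlled path with
values in `L(V, W)`.  The compensated Riemann sums
`J_{s,t}(𝒫) = Σᵢ (Y_{tᵢ₋₁} X¹_{tᵢ₋₁,tᵢ} + Y†_{tᵢ₋₁} X²_{tᵢ₋₁,tᵢ})` converge as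
the mesh tends to `0`, and the limit `I = ∫ₛᵗ Y dX` satisfies
`‖I − (Y_s X¹_{s,t} + Y†_s X²_{s,t})‖
  ≤ κ_α (t−s)^{3α} (‖Y♯‖_{2α} ‖X¹‖_α + ‖Y†‖_α ‖X²‖_{2α})`
with `κ_α = 2^{3α} ζ(3α)`. -/
theorem rough_integral_exists_and_estimate
    {V V2 W : Type*} [NormedAddCommGroup V] [NormedSpace ℝ V]
    [NormedAddCommGroup V2] [NormedSpace ℝ V2]
    [NormedAddCommGroup W] [NormedSpace ℝ W] [CompleteSpace W]
    (a b α : ℝ) (hab : a ≤ b) (hα1 : 1/3 < α) (hα2 : α ≤ 1/2)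
    (X1 : ℝ → ℝ → V) (X2 : ℝ → ℝ → V2)
    (tmul : V →L[ℝ] V →L[ℝ] V2)
    (Y : ℝ → V →L[ℝ] W)
    (Ydag : ℝ → V2 →L[ℝ] W)
    (Ysharp : ℝ → ℝ → V →L[ℝ] W)
    (CX1 CX2 CYd CYs : ℝ)
    -- Hölder bounds (`CX1, CX2, CYd, CYs` bound the seminorms
    -- `‖X¹‖_{α,[a,b]}, ‖X²‖_{2α,[a,b]}, ‖Y†‖_{α,[a,b]}, ‖Y♯‖_{2α,[a,b]}`)
    (hX1 : ∀ s t : ℝ, a ≤ s → s ≤ t → t ≤ b → ‖X1 s t‖ ≤ CX1 * (t - s) ^ α)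
    (hX2 : ∀ s t : ℝ, a ≤ s → s ≤ t → t ≤ b → ‖X2 s t‖ ≤ CX2 * (t - s) ^ (2 * α))
    (hYd : ∀ s t : ℝ, a ≤ s → s ≤ t → t ≤ b → ‖Ydag t - Ydag s‖ ≤ CYd * (t - s) ^ α)
    (hYs : ∀ s t : ℝ, a ≤ s → s ≤ t → t ≤ b → ‖Ysharp s t‖ ≤ CYs * (t - s) ^ (2 * α))
    -- Chen's relations
    (hChen1 : ∀ s u t : ℝ, a ≤ s → s ≤ u → u ≤ t → t ≤ b →
      X1 s t = X1 s u + X1 u t)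
    (hChen2 : ∀ s u t : ℝ, a ≤ s → s ≤ u → u ≤ t → t ≤ b →
      X2 s t = X2 s u + X2 u t + tmul (X1 s u) (X1 u t))
    -- the controlled path relation `Y_t − Y_s = Y†_s X¹_{s,t} + Y♯_{s,t}`
    (hCtrl : ∀ s t : ℝ, a ≤ s → s ≤ t → t ≤ b →
      Y t - Y s = (Ydag s).comp (tmul (X1 s t)) + Ysharp s t) :
    ∀ s t : ℝ, a ≤ s → s ≤ t → t ≤ b →
      ∃ I : W,
        -- convergence of compensated Riemann sums as the mesh tends to 0
        (∀ ε : ℝ, 0 < ε → ∃ δ : ℝ, 0 < δ ∧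
          ∀ (N : ℕ) (p : Fin (N + 1) → ℝ), Monotone p →
            p 0 = s → p (Fin.last N) = t →
            (∀ i : Fin N, p i.succ - p i.castSucc < δ) →
            ‖(∑ i : Fin N,
                (Y (p i.castSucc) (X1 (p i.castSucc) (p i.succ))
                  + Ydag (p i.castSucc) (X2 (p i.castSucc) (p i.succ)))) - I‖ < ε)
        -- the sewing estimate with `κ_α = 2^{3α} ζ(3α)`
        ∧ ‖I - (Y s (X1 s t) + Ydag s (X2 s t))‖
            ≤ (2 : ℝ) ^ (3 * α) * (∑' n : ℕ, 1 / ((n : ℝ) + 1) ^ (3 * α))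
              * (t - s) ^ (3 * α) * (CYs * CX1 + CYd * CX2) :=
  rough_integral_exists_and_estimate_general a b α hα1 X1 X2 tmul Y Ydag Ysharp CX1 CX2 CYd CYs hX1
    hX2 hYd hYs hChen1 hChen2 hCtrl
end

section
/- Let X be an α-Hölder rough path over V, (Y, Y†, Y♯) a W-valued controlled path with respect to X on [a,b], and g : W → W' a C² function between Euclidean spaces. Then (g∘Y, (∇g∘Y)·Y†) is a W'-valued controlled path with respect to X on [a,b], with remainder g(Y)♯_{s,t} = ∇g(Y_s) Y♯_{s,t} + ∫₀¹ (1−θ) ∇²g(Y_s + θ(Y_t − Y_s))⟨Y_t − Y_s, Y_t − Y_s⟩ dθ, which is 2α-Hölder. -/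
/-!
Taylor's formula to second order at `Y s` in the direction `Y t - Y s`, combined with the
controlled relation, gives the formula for the remainder. For the bounds: `Y` is continuous on
`[a, b]`, so the union `K` of the segments joining points of `Y '' [a, b]` is compact and `∇g`,
`∇²g` are bounded on `K`. The mean value inequality along these segments turns the Hölder bounds
of `Y`, `Y†`, `Y♯` into those of `g ∘ Y`, `∇g(Y) Y†` and the remainder, where the quadratic
Taylor term contributes `‖Y t - Y s‖² ≲ (t - s) ^ (2α)`.
-/

open Set

section Segments

variable {E : Type*} [AddCommGroup E] [Module ℝ E]

theorem segment_subset_biUnion_segment {S : Set E} {x y : E} (hx : x ∈ S) (hy : y ∈ S) :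
    segment ℝ x y ⊆ ⋃ x ∈ S, ⋃ y ∈ S, segment ℝ x y :=
  subset_iUnion₂_of_subset x hx (subset_iUnion₂ (s := fun y _ => segment ℝ x y) y hy)

variable [TopologicalSpace E] [IsTopologicalAddGroup E] [ContinuousSMul ℝ E]

theorem IsCompact.biUnion_segment {S : Set E} (hS : IsCompact S) :
    IsCompact (⋃ x ∈ S, ⋃ y ∈ S, segment ℝ x y) := by
  have : (⋃ x ∈ S, ⋃ y ∈ S, segment ℝ x y)
      = (fun p : E × E × ℝ => p.1 + p.2.2 • (p.2.1 - p.1)) '' (S ×ˢ S ×ˢ Icc 0 1) := by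
    ext z
    simp [segment_eq_image', and_assoc]
  rw [this]
  exact (hS.prod (hS.prod isCompact_Icc)).image (by fun_prop)

end Segments

section Calculus

variable {W W' : Type*} [NormedAddCommGroup W] [NormedSpace ℝ W]
  [NormedAddCommGroup W'] [NormedSpace ℝ W'] {g : W → W'} {x y : W}

theorem sub_sub_fderiv_eq_integral [CompleteSpace W'] (hg : ContDiff ℝ 2 g) (x y : W) :
    g y - g x - fderiv ℝ g x (y - x) = ∫ θ in (0:ℝ)..1,
      (1 - θ) • iteratedFDeriv ℝ 2 g (x + θ • (y - x)) ![y - x, y - x] := by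
  have h := map_add_eq_sum_add_integral_iteratedFDeriv (n := 1) (x := x) (y := y - x)
    fun _ _ => hg.contDiffAt
  have hv : ![y - x, y - x] = fun _ => y - x := by ext i; fin_cases i <;> rfl
  simp only [add_sub_cancel, Finset.sum_range_succ, Finset.range_one, Finset.sum_singleton,
    Nat.factorial_zero, Nat.factorial_one, Nat.cast_one, inv_one, one_smul, pow_one,
    iteratedFDeriv_zero_apply, iteratedFDeriv_one_apply] at h
  rw [hv, h, map_sub]
  abel

theorem norm_sub_le_of_forall_mem_segment {f : W → W'} (hf : Differentiable ℝ f) {M : ℝ}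
    (hM : ∀ z ∈ segment ℝ x y, ‖fderiv ℝ f z‖ ≤ M) : ‖f y - f x‖ ≤ M * ‖y - x‖ :=
  (convex_segment x y).norm_image_sub_le_of_norm_fderiv_le (fun z _ => hf z) hM
    (left_mem_segment ℝ x y) (right_mem_segment ℝ x y)

theorem norm_sub_sub_fderiv_le (hg : ContDiff ℝ 2 g) {M : ℝ}
    (hM : ∀ z ∈ segment ℝ x y, ‖fderiv ℝ (fderiv ℝ g) z‖ ≤ M) :
    ‖g y - g x - fderiv ℝ g x (y - x)‖ ≤ M * ‖y - x‖ ^ 2 := by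
  have hg' : Differentiable ℝ (fderiv ℝ g) := (hg.fderiv_right le_rfl).differentiable one_ne_zero
  have hM0 : 0 ≤ M :=
    (norm_nonneg (fderiv ℝ (fderiv ℝ g) x)).trans (hM x (left_mem_segment ℝ x y))
  have hDg : ∀ z ∈ segment ℝ x y, ‖fderiv ℝ g z - fderiv ℝ g x‖ ≤ M * ‖y - x‖ := fun z hz =>
    calc ‖fderiv ℝ g z - fderiv ℝ g x‖ ≤ M * ‖z - x‖ :=
          norm_sub_le_of_forall_mem_segment hg' fun w hw =>
            hM w ((convex_segment x y).segment_subset (left_mem_segment ℝ x y) hz hw)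
      _ ≤ M * ‖y - x‖ := by gcongr; exact norm_sub_le_of_mem_segment hz
  simpa [sq, mul_assoc] using (convex_segment x y).norm_image_sub_le_of_norm_fderiv_le'
    (fun z _ => hg.differentiable two_ne_zero z) hDg (left_mem_segment ℝ x y)
    (right_mem_segment ℝ x y)

end Calculus

theorem ContinuousLinearMap.norm_comp_sub_comp_le {𝕜 V W W' : Type*} [NontriviallyNormedField 𝕜]
    [SeminormedAddCommGroup V] [NormedSpace 𝕜 V] [SeminormedAddCommGroup W] [NormedSpace 𝕜 W]
    [SeminormedAddCommGroup W'] [NormedSpace 𝕜 W'] (L L' : W →L[𝕜] W') (A A' : V →L[𝕜] W) :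
    ‖L'.comp A' - L.comp A‖ ≤ ‖L' - L‖ * ‖A'‖ + ‖L‖ * ‖A' - A‖ :=
  calc ‖L'.comp A' - L.comp A‖ = ‖(L' - L).comp A' + L.comp (A' - A)‖ := by
        rw [ContinuousLinearMap.sub_comp, ContinuousLinearMap.comp_sub, sub_add_sub_cancel]
    _ ≤ ‖L' - L‖ * ‖A'‖ + ‖L‖ * ‖A' - A‖ :=
        (norm_add_le _ _).trans (add_le_add ((L' - L).opNorm_comp_le A') (L.opNorm_comp_le _))

theorem continuousOn_Icc_of_norm_sub_le_rpow {E : Type*} [SeminormedAddCommGroup E]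
    {a b α C : ℝ} {Y : ℝ → E} (hα : 0 < α)
    (hY : ∀ s t : ℝ, a ≤ s → s ≤ t → t ≤ b → ‖Y t - Y s‖ ≤ C * (t - s) ^ α) :
    ContinuousOn Y (Icc a b) := by
  have hsymm : ∀ s ∈ Icc a b, ∀ t ∈ Icc a b, ‖Y t - Y s‖ ≤ C * |t - s| ^ α := by
    intro s hs t ht
    rcases le_total s t with hst | hts
    · rw [abs_of_nonneg (sub_nonneg.2 hst)]
      exact hY s t hs.1 hst ht.2
    · rw [norm_sub_rev, abs_sub_comm, abs_of_nonneg (sub_nonneg.2 hts)]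
      exact hY t s ht.1 hts hs.2
  intro u hu
  rw [ContinuousWithinAt, tendsto_iff_norm_sub_tendsto_zero]
  have hlim : ContinuousAt (fun t => C * |t - u| ^ α) u := by fun_prop (disch := positivity)
  refine squeeze_zero' (Filter.Eventually.of_forall fun _ => norm_nonneg _)
    (eventually_nhdsWithin_of_forall fun t ht => hsymm u hu t ht) ?_
  simpa [hα.ne'] using hlim.continuousWithinAt.tendsto (s := Icc a b)

section ControlledPath

variable {V W W' : Type*} [NormedAddCommGroup V] [NormedSpace ℝ V]
  [NormedAddCommGroup W] [NormedSpace ℝ W] [NormedAddCommGroup W'] [NormedSpace ℝ W']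
  {g : W → W'} {K : Set W} {M₁ M₂ : ℝ} {a b α CY : ℝ} {Y : ℝ → W}

theorem norm_comp_sub_le_rpow (hg : Differentiable ℝ g)
    (hYK : ∀ s t : ℝ, a ≤ s → s ≤ t → t ≤ b → segment ℝ (Y s) (Y t) ⊆ K)
    (hM₁ : ∀ z ∈ K, ‖fderiv ℝ g z‖ ≤ M₁)
    (hY : ∀ s t : ℝ, a ≤ s → s ≤ t → t ≤ b → ‖Y t - Y s‖ ≤ CY * (t - s) ^ α) :
    ∀ s t : ℝ, a ≤ s → s ≤ t → t ≤ b → ‖g (Y t) - g (Y s)‖ ≤ M₁ * CY * (t - s) ^ α := by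
  intro s t hs hst ht
  have hseg := hYK s t hs hst ht
  have hM₁0 : 0 ≤ M₁ := (hM₁ _ (hseg (left_mem_segment ℝ _ _))).trans' (norm_nonneg _)
  calc ‖g (Y t) - g (Y s)‖ ≤ M₁ * ‖Y t - Y s‖ :=
        norm_sub_le_of_forall_mem_segment hg fun z hz => hM₁ z (hseg hz)
    _ ≤ M₁ * (CY * (t - s) ^ α) := by gcongr; exact hY s t hs hst ht
    _ = M₁ * CY * (t - s) ^ α := (mul_assoc _ _ _).symm

theorem norm_fderiv_comp_sub_le_rpow {Ydag : ℝ → V →L[ℝ] W} {B CYd : ℝ}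
    (hg' : Differentiable ℝ (fderiv ℝ g))
    (hYK : ∀ s t : ℝ, a ≤ s → s ≤ t → t ≤ b → segment ℝ (Y s) (Y t) ⊆ K)
    (hM₁ : ∀ z ∈ K, ‖fderiv ℝ g z‖ ≤ M₁) (hM₂ : ∀ z ∈ K, ‖fderiv ℝ (fderiv ℝ g) z‖ ≤ M₂)
    (hB : ∀ t ∈ Icc a b, ‖Ydag t‖ ≤ B)
    (hY : ∀ s t : ℝ, a ≤ s → s ≤ t → t ≤ b → ‖Y t - Y s‖ ≤ CY * (t - s) ^ α)
    (hYd : ∀ s t : ℝ, a ≤ s → s ≤ t → t ≤ b → ‖Ydag t - Ydag s‖ ≤ CYd * (t - s) ^ α) :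
    ∀ s t : ℝ, a ≤ s → s ≤ t → t ≤ b →
      ‖(fderiv ℝ g (Y t)).comp (Ydag t) - (fderiv ℝ g (Y s)).comp (Ydag s)‖
        ≤ (M₂ * CY * B + M₁ * CYd) * (t - s) ^ α := by
  intro s t hs hst ht
  have hseg := hYK s t hs hst ht
  have hM₁s : ‖fderiv ℝ g (Y s)‖ ≤ M₁ := hM₁ _ (hseg (left_mem_segment ℝ _ _))
  have hM₂0 : 0 ≤ M₂ :=
    (norm_nonneg (fderiv ℝ (fderiv ℝ g) (Y s))).trans (hM₂ _ (hseg (left_mem_segment ℝ _ _)))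
  have hDg : ‖fderiv ℝ g (Y t) - fderiv ℝ g (Y s)‖ ≤ M₂ * (CY * (t - s) ^ α) :=
    calc ‖fderiv ℝ g (Y t) - fderiv ℝ g (Y s)‖ ≤ M₂ * ‖Y t - Y s‖ :=
          norm_sub_le_of_forall_mem_segment hg' fun z hz => hM₂ z (hseg hz)
      _ ≤ M₂ * (CY * (t - s) ^ α) := by gcongr; exact hY s t hs hst ht
  calc ‖(fderiv ℝ g (Y t)).comp (Ydag t) - (fderiv ℝ g (Y s)).comp (Ydag s)‖
      ≤ ‖fderiv ℝ g (Y t) - fderiv ℝ g (Y s)‖ * ‖Ydag t‖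
        + ‖fderiv ℝ g (Y s)‖ * ‖Ydag t - Ydag s‖ :=
        ContinuousLinearMap.norm_comp_sub_comp_le _ _ _ _
    _ ≤ M₂ * (CY * (t - s) ^ α) * B + M₁ * (CYd * (t - s) ^ α) := by
        gcongr
        · exact (norm_nonneg _).trans hDg
        · exact hB t ⟨hs.trans hst, ht⟩
        · exact (norm_nonneg _).trans hM₁s
        · exact hYd s t hs hst ht
    _ = (M₂ * CY * B + M₁ * CYd) * (t - s) ^ α := by ring

theorem norm_controlled_remainder_le_rpow {X1 : ℝ → ℝ → V} {Ydag : ℝ → V →L[ℝ] W}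
    {Ysharp : ℝ → ℝ → W} {CYs : ℝ} (hg : ContDiff ℝ 2 g)
    (hYK : ∀ s t : ℝ, a ≤ s → s ≤ t → t ≤ b → segment ℝ (Y s) (Y t) ⊆ K)
    (hM₁ : ∀ z ∈ K, ‖fderiv ℝ g z‖ ≤ M₁) (hM₂ : ∀ z ∈ K, ‖fderiv ℝ (fderiv ℝ g) z‖ ≤ M₂)
    (hY : ∀ s t : ℝ, a ≤ s → s ≤ t → t ≤ b → ‖Y t - Y s‖ ≤ CY * (t - s) ^ α)
    (hYs : ∀ s t : ℝ, a ≤ s → s ≤ t → t ≤ b → ‖Ysharp s t‖ ≤ CYs * (t - s) ^ (2 * α))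
    (hCtrl : ∀ s t : ℝ, a ≤ s → s ≤ t → t ≤ b → Y t - Y s = Ydag s (X1 s t) + Ysharp s t) :
    ∀ s t : ℝ, a ≤ s → s ≤ t → t ≤ b →
      ‖g (Y t) - g (Y s) - fderiv ℝ g (Y s) (Ydag s (X1 s t))‖
        ≤ (M₁ * CYs + M₂ * CY ^ 2) * (t - s) ^ (2 * α) := by
  intro s t hs hst ht
  have hseg := hYK s t hs hst ht
  have hM₁s : ‖fderiv ℝ g (Y s)‖ ≤ M₁ := hM₁ _ (hseg (left_mem_segment ℝ _ _))
  have hM₂0 : 0 ≤ M₂ :=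
    (norm_nonneg (fderiv ℝ (fderiv ℝ g) (Y s))).trans (hM₂ _ (hseg (left_mem_segment ℝ _ _)))
  have hsplit : g (Y t) - g (Y s) - fderiv ℝ g (Y s) (Ydag s (X1 s t))
      = fderiv ℝ g (Y s) (Ysharp s t) + (g (Y t) - g (Y s) - fderiv ℝ g (Y s) (Y t - Y s)) := by
    rw [hCtrl s t hs hst ht, map_add]; abel
  calc ‖g (Y t) - g (Y s) - fderiv ℝ g (Y s) (Ydag s (X1 s t))‖
      ≤ M₁ * ‖Ysharp s t‖ + M₂ * ‖Y t - Y s‖ ^ 2 := by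
        rw [hsplit]
        refine (norm_add_le _ _).trans (add_le_add ?_ ?_)
        · exact (ContinuousLinearMap.le_opNorm _ _).trans (by gcongr)
        · exact norm_sub_sub_fderiv_le hg fun z hz => hM₂ z (hseg hz)
    _ ≤ M₁ * (CYs * (t - s) ^ (2 * α)) + M₂ * (CY * (t - s) ^ α) ^ 2 := by
        gcongr
        · exact (norm_nonneg _).trans hM₁s
        · exact hYs s t hs hst ht
        · exact hY s t hs hst ht
    _ = (M₁ * CYs + M₂ * CY ^ 2) * (t - s) ^ (2 * α) := by
        have hsq : (t - s) ^ (2 * α) = ((t - s) ^ α) ^ 2 := by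
          rw [mul_comm]; exact_mod_cast Real.rpow_mul_natCast (sub_nonneg.2 hst) α 2
        rw [hsq]; ring

end ControlledPath

theorem controlled_path_comp_C2_general
    {V W W' : Type*} [NormedAddCommGroup V] [NormedSpace ℝ V]
    [NormedAddCommGroup W] [NormedSpace ℝ W]
    [NormedAddCommGroup W'] [NormedSpace ℝ W'] [CompleteSpace W']
    (a b α : ℝ) (hα1 : 1/3 < α)
    (X1 : ℝ → ℝ → V)
    (Y : ℝ → W) (Ydag : ℝ → V →L[ℝ] W) (Ysharp : ℝ → ℝ → W)
    (CY CYd CYs : ℝ)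
    (hY : ∀ s t : ℝ, a ≤ s → s ≤ t → t ≤ b → ‖Y t - Y s‖ ≤ CY * (t - s) ^ α)
    (hYd : ∀ s t : ℝ, a ≤ s → s ≤ t → t ≤ b → ‖Ydag t - Ydag s‖ ≤ CYd * (t - s) ^ α)
    (hYs : ∀ s t : ℝ, a ≤ s → s ≤ t → t ≤ b → ‖Ysharp s t‖ ≤ CYs * (t - s) ^ (2 * α))
    -- the controlled path relation `Y_t − Y_s = Y†_s X¹_{s,t} + Y♯_{s,t}`
    (hCtrl : ∀ s t : ℝ, a ≤ s → s ≤ t → t ≤ b →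
      Y t - Y s = Ydag s (X1 s t) + Ysharp s t)
    (g : W → W') (hg : ContDiff ℝ 2 g) :
    -- `(g ∘ Y, ∇g(Y)·Y†)` is a controlled path on `[a,b]` …
    (∃ C : ℝ, ∀ s t : ℝ, a ≤ s → s ≤ t → t ≤ b →
      ‖g (Y t) - g (Y s)‖ ≤ C * (t - s) ^ α
      ∧ ‖(fderiv ℝ g (Y t)).comp (Ydag t) - (fderiv ℝ g (Y s)).comp (Ydag s)‖
          ≤ C * (t - s) ^ α
      ∧ ‖g (Y t) - g (Y s) - fderiv ℝ g (Y s) (Ydag s (X1 s t))‖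
          ≤ C * (t - s) ^ (2 * α))
    -- … and the remainder is given by the Taylor formula.
    ∧ (∀ s t : ℝ, a ≤ s → s ≤ t → t ≤ b →
        g (Y t) - g (Y s) - fderiv ℝ g (Y s) (Ydag s (X1 s t))
          = fderiv ℝ g (Y s) (Ysharp s t)
            + ∫ θ in (0:ℝ)..1, (1 - θ) •
                iteratedFDeriv ℝ 2 g (Y s + θ • (Y t - Y s)) ![Y t - Y s, Y t - Y s]) := by
  have hα : 0 < α := lt_trans (by norm_num) hα1
  have hg1 : ContDiff ℝ 1 (fderiv ℝ g) := hg.fderiv_right le_rfl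
  set K := ⋃ x ∈ Y '' Icc a b, ⋃ y ∈ Y '' Icc a b, segment ℝ x y
  have hK : IsCompact K := (isCompact_Icc.image_of_continuousOn
    (continuousOn_Icc_of_norm_sub_le_rpow hα hY)).biUnion_segment
  have hYK : ∀ s t, a ≤ s → s ≤ t → t ≤ b → segment ℝ (Y s) (Y t) ⊆ K := fun s t hs hst ht =>
    segment_subset_biUnion_segment (mem_image_of_mem Y ⟨hs, hst.trans ht⟩)
      (mem_image_of_mem Y ⟨hs.trans hst, ht⟩)
  obtain ⟨M₁, hM₁⟩ :=
    hK.exists_bound_of_continuousOn (hg.continuous_fderiv two_ne_zero).continuousOn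
  obtain ⟨M₂, hM₂⟩ :=
    hK.exists_bound_of_continuousOn (hg1.continuous_fderiv one_ne_zero).continuousOn
  obtain ⟨B, hB⟩ := isCompact_Icc.exists_bound_of_continuousOn
    (continuousOn_Icc_of_norm_sub_le_rpow hα hYd)
  have h₁ := norm_comp_sub_le_rpow (hg.differentiable two_ne_zero) hYK hM₁ hY
  have h₂ :=
    norm_fderiv_comp_sub_le_rpow (hg1.differentiable one_ne_zero) hYK hM₁ hM₂ hB hY hYd
  have h₃ := norm_controlled_remainder_le_rpow hg hYK hM₁ hM₂ hY hYs hCtrl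
  refine ⟨⟨max (M₁ * CY) (max (M₂ * CY * B + M₁ * CYd) (M₁ * CYs + M₂ * CY ^ 2)),
    fun s t hs hst ht => ⟨?_, ?_, ?_⟩⟩, fun s t hs hst ht => ?_⟩
  · exact (h₁ s t hs hst ht).trans (by gcongr; simp)
  · exact (h₂ s t hs hst ht).trans (by gcongr; simp)
  · exact (h₃ s t hs hst ht).trans (by gcongr; simp)
  · rw [← sub_sub_fderiv_eq_integral hg, eq_sub_of_add_eq (hCtrl s t hs hst ht).symm, map_sub]
    abel

/-- Stability of controlled paths under composition with a `C²` map.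
If `(Y, Y†, Y♯)` is a `W`-valued controlled path w.r.t. the rough path `X` on
`[a,b]` and `g : W → W'` is `C²`, then `(g ∘ Y, (∇g ∘ Y) · Y†)` is a `W'`-valued
controlled path on `[a,b]`: `g ∘ Y` and its Gubinelli derivative are `α`-Hölder,
the remainder `g(Y)♯_{s,t} = g(Y_t) − g(Y_s) − ∇g(Y_s)(Y†_s X¹_{s,t})` is
`2α`-Hölder, and it is given by the Taylor formula
`g(Y)♯_{s,t} = ∇g(Y_s) Y♯_{s,t}
  + ∫₀¹ (1−θ) ∇²g(Y_s + θ(Y_t − Y_s))⟨Y_t − Y_s, Y_t − Y_s⟩ dθ`. -/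
theorem controlled_path_comp_C2
    {V W W' : Type*} [NormedAddCommGroup V] [NormedSpace ℝ V]
    [NormedAddCommGroup W] [NormedSpace ℝ W]
    [NormedAddCommGroup W'] [NormedSpace ℝ W'] [CompleteSpace W']
    (a b α : ℝ) (hab : a ≤ b) (hα1 : 1/3 < α) (hα2 : α ≤ 1/2)
    (X1 : ℝ → ℝ → V)
    (Y : ℝ → W) (Ydag : ℝ → V →L[ℝ] W) (Ysharp : ℝ → ℝ → W)
    (CX1 CY CYd CYs : ℝ)
    (hX1 : ∀ s t : ℝ, a ≤ s → s ≤ t → t ≤ b → ‖X1 s t‖ ≤ CX1 * (t - s) ^ α)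
    (hY : ∀ s t : ℝ, a ≤ s → s ≤ t → t ≤ b → ‖Y t - Y s‖ ≤ CY * (t - s) ^ α)
    (hYd : ∀ s t : ℝ, a ≤ s → s ≤ t → t ≤ b → ‖Ydag t - Ydag s‖ ≤ CYd * (t - s) ^ α)
    (hYs : ∀ s t : ℝ, a ≤ s → s ≤ t → t ≤ b → ‖Ysharp s t‖ ≤ CYs * (t - s) ^ (2 * α))
    -- the controlled path relation `Y_t − Y_s = Y†_s X¹_{s,t} + Y♯_{s,t}`
    (hCtrl : ∀ s t : ℝ, a ≤ s → s ≤ t → t ≤ b →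
      Y t - Y s = Ydag s (X1 s t) + Ysharp s t)
    (g : W → W') (hg : ContDiff ℝ 2 g) :
    -- `(g ∘ Y, ∇g(Y)·Y†)` is a controlled path on `[a,b]` …
    (∃ C : ℝ, ∀ s t : ℝ, a ≤ s → s ≤ t → t ≤ b →
      ‖g (Y t) - g (Y s)‖ ≤ C * (t - s) ^ α
      ∧ ‖(fderiv ℝ g (Y t)).comp (Ydag t) - (fderiv ℝ g (Y s)).comp (Ydag s)‖
          ≤ C * (t - s) ^ α
      ∧ ‖g (Y t) - g (Y s) - fderiv ℝ g (Y s) (Ydag s (X1 s t))‖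
          ≤ C * (t - s) ^ (2 * α))
    -- … and the remainder is given by the Taylor formula.
    ∧ (∀ s t : ℝ, a ≤ s → s ≤ t → t ≤ b →
        g (Y t) - g (Y s) - fderiv ℝ g (Y s) (Ydag s (X1 s t))
          = fderiv ℝ g (Y s) (Ysharp s t)
            + ∫ θ in (0:ℝ)..1, (1 - θ) •
                iteratedFDeriv ℝ 2 g (Y s + θ • (Y t - Y s)) ![Y t - Y s, Y t - Y s]) :=
  controlled_path_comp_C2_general a b α hα1 X1 Y Ydag Ysharp CY CYd CYs hY hYd hYs hCtrl g hg
end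

section
/- Let 0 ≤ a < b < c ≤ T, X an α-Hölder rough path over V. If (Y, Y†) is a controlled path w.r.t. X on [a,b] and (Ŷ, Ŷ†) is a controlled path w.r.t. X on [b,c] with Y_b = Ŷ_b and Y†_b = Ŷ†_b, then the concatenation (Y*Ŷ, Y†*Ŷ†) is a controlled path w.r.t. X on [a,c]; in particular its remainder satisfies, for a ≤ s ≤ b ≤ t ≤ c, Z♯_{s,t} = Y♯_{s,b} + Ŷ♯_{b,t} + (Y†_b − Y†_s) X¹_{b,t}, and hence is 2α-Hölder on Δ_{[a,c]}. -/
set_option maxHeartbeats 1600000 in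
/-- Concatenation of controlled paths.  If `(Y, Y†)` is a controlled path w.r.t.
`X` on `[a,b]` and `(Ŷ, Ŷ†)` one on `[b,c]`, agreeing (together with the
Gubinelli derivatives) at `b`, then the concatenation `(Z, Z†)` is a controlled
path on `[a,c]`: for `a ≤ s ≤ b ≤ t ≤ c` its remainder satisfies
`Z♯_{s,t} = Y♯_{s,b} + Ŷ♯_{b,t} + (Y†_b − Y†_s) X¹_{b,t}`, and the remainder is
`2α`-Hölder on `Δ_{[a,c]}`. -/
theorem controlled_path_concatenation
    {V W : Type*} [NormedAddCommGroup V] [NormedSpace ℝ V]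
    [NormedAddCommGroup W] [NormedSpace ℝ W]
    (a b c α : ℝ) (hab : a < b) (hbc : b < c) (hα1 : 1/3 < α) (hα2 : α ≤ 1/2)
    (X1 : ℝ → ℝ → V)
    (Y Yhat : ℝ → W) (Ydag Yhatdag : ℝ → V →L[ℝ] W)
    (Ysharp Yhatsharp : ℝ → ℝ → W)
    (CX1 CYd CYhd CYs CYhs : ℝ)
    (hChen1 : ∀ s u t : ℝ, a ≤ s → s ≤ u → u ≤ t → t ≤ c →
      X1 s t = X1 s u + X1 u t)
    (hX1 : ∀ s t : ℝ, a ≤ s → s ≤ t → t ≤ c → ‖X1 s t‖ ≤ CX1 * (t - s) ^ α)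
    (hYd : ∀ s t : ℝ, a ≤ s → s ≤ t → t ≤ b → ‖Ydag t - Ydag s‖ ≤ CYd * (t - s) ^ α)
    (hYhd : ∀ s t : ℝ, b ≤ s → s ≤ t → t ≤ c →
      ‖Yhatdag t - Yhatdag s‖ ≤ CYhd * (t - s) ^ α)
    (hYs : ∀ s t : ℝ, a ≤ s → s ≤ t → t ≤ b → ‖Ysharp s t‖ ≤ CYs * (t - s) ^ (2 * α))
    (hYhs : ∀ s t : ℝ, b ≤ s → s ≤ t → t ≤ c →
      ‖Yhatsharp s t‖ ≤ CYhs * (t - s) ^ (2 * α))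
    -- controlled path relations on `[a,b]` and `[b,c]`
    (hCtrl : ∀ s t : ℝ, a ≤ s → s ≤ t → t ≤ b →
      Y t - Y s = Ydag s (X1 s t) + Ysharp s t)
    (hCtrlHat : ∀ s t : ℝ, b ≤ s → s ≤ t → t ≤ c →
      Yhat t - Yhat s = Yhatdag s (X1 s t) + Yhatsharp s t)
    -- matching at time `b`
    (hmatch : Y b = Yhat b) (hmatchdag : Ydag b = Yhatdag b)
    -- the concatenated controlled path `(Z, Z†)`
    (Z : ℝ → W) (Zdag : ℝ → V →L[ℝ] W)
    (hZ : ∀ t, Z t = if t ≤ b then Y t else Yhat t)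
    (hZdag : ∀ t, Zdag t = if t ≤ b then Ydag t else Yhatdag t) :
    -- remainder identity on mixed intervals
    (∀ s t : ℝ, a ≤ s → s ≤ b → b ≤ t → t ≤ c →
      Z t - Z s - Zdag s (X1 s t)
        = Ysharp s b + Yhatsharp b t + (Ydag b - Ydag s) (X1 b t))
    -- the remainder of the concatenation is `2α`-Hölder on `[a,c]`
    ∧ (∃ C : ℝ, ∀ s t : ℝ, a ≤ s → s ≤ t → t ≤ c →
        ‖Z t - Z s - Zdag s (X1 s t)‖ ≤ C * (t - s) ^ (2 * α)) := by
  have hα0 : (0:ℝ) < α := by linarith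
  -- X1 b b = 0
  have hX1bb : X1 b b = 0 := by
    have h := hChen1 b b b (by linarith) le_rfl le_rfl (by linarith)
    exact left_eq_add.mp h
  have hYhsbb : Yhatsharp b b = 0 := by
    have h := hCtrlHat b b le_rfl le_rfl (by linarith)
    simp [hX1bb] at h
    exact h.symm
  -- Part 1: the identity
  have hid : ∀ s t : ℝ, a ≤ s → s ≤ b → b ≤ t → t ≤ c →
      Z t - Z s - Zdag s (X1 s t)
        = Ysharp s b + Yhatsharp b t + (Ydag b - Ydag s) (X1 b t) := by
    intro s t hs hsb hbt htc
    rw [hZ, hZ, hZdag, if_pos hsb, if_pos hsb]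
    by_cases ht : t ≤ b
    · have htb : t = b := le_antisymm ht hbt
      subst htb
      rw [if_pos le_rfl]
      have h1 := hCtrl s t hs hsb le_rfl
      simp [hX1bb, hYhsbb]
      rw [h1]
      abel
    · rw [if_neg ht]
      have hbt' : b ≤ t := hbt
      have hchen := hChen1 s b t hs hsb hbt' htc
      have h1 := hCtrl s b hs hsb le_rfl
      have h2 := hCtrlHat b t le_rfl hbt' htc
      rw [hchen, map_add]
      calc Yhat t - Y s - (Ydag s (X1 s b) + Ydag s (X1 b t))
          = (Yhat t - Yhat b) + (Y b - Y s) - Ydag s (X1 s b) - Ydag s (X1 b t) := by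
            rw [hmatch]; abel
        _ = (Yhatdag b (X1 b t) + Yhatsharp b t) + (Ydag s (X1 s b) + Ysharp s b)
              - Ydag s (X1 s b) - Ydag s (X1 b t) := by rw [h2, h1]
        _ = Ysharp s b + Yhatsharp b t + (Ydag b (X1 b t) - Ydag s (X1 b t)) := by
            rw [hmatchdag]; abel
        _ = Ysharp s b + Yhatsharp b t + (Ydag b - Ydag s) (X1 b t) := by
            rw [ContinuousLinearMap.sub_apply]
  refine ⟨hid, ⟨CYs + CYhs + CYd * CX1, ?_⟩⟩
  -- nonnegativity of constants
  have hCYs : 0 ≤ CYs := by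
    have hp : (0:ℝ) < (b - a) ^ (2*α) := Real.rpow_pos_of_pos (by linarith) _
    nlinarith [(norm_nonneg (Ysharp a b)).trans (hYs a b le_rfl hab.le le_rfl)]
  have hCYhs : 0 ≤ CYhs := by
    have hp : (0:ℝ) < (c - b) ^ (2*α) := Real.rpow_pos_of_pos (by linarith) _
    nlinarith [(norm_nonneg (Yhatsharp b c)).trans (hYhs b c le_rfl hbc.le le_rfl)]
  have hCYd : 0 ≤ CYd := by
    have hp : (0:ℝ) < (b - a) ^ α := Real.rpow_pos_of_pos (by linarith) _
    nlinarith [(norm_nonneg (Ydag b - Ydag a)).trans (hYd a b le_rfl hab.le le_rfl)]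
  have hCX1 : 0 ≤ CX1 := by
    have hp : (0:ℝ) < (c - a) ^ α := Real.rpow_pos_of_pos (by linarith) _
    nlinarith [(norm_nonneg (X1 a c)).trans (hX1 a c le_rfl (by linarith) le_rfl)]
  intro s t hs hst htc
  have hD : (0:ℝ) ≤ (t - s) ^ (2*α) := Real.rpow_nonneg (by linarith) _
  by_cases ht : t ≤ b
  · -- both in [a,b]
    rw [hZ, hZ, hZdag, if_pos ht, if_pos (hst.trans ht), if_pos (hst.trans ht)]
    have h1 := hCtrl s t hs hst ht
    have : Y t - Y s - Ydag s (X1 s t) = Ysharp s t := by rw [h1]; abel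
    rw [this]
    have h2 := hYs s t hs hst ht
    have h3 : 0 ≤ (CYhs + CYd * CX1) * ((t - s) ^ (2*α)) :=
      mul_nonneg (add_nonneg hCYhs (mul_nonneg hCYd hCX1)) hD
    linarith [h2, h3, (by ring : (CYs + CYhs + CYd * CX1) * ((t - s) ^ (2*α))
      = CYs * ((t - s) ^ (2*α)) + (CYhs + CYd * CX1) * ((t - s) ^ (2*α)))]
  · by_cases hsb : s ≤ b
    · -- mixed case
      have hbt : b ≤ t := le_of_not_ge ht
      rw [hid s t hs hsb hbt htc]
      have e1 := hYs s b hs hsb le_rfl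
      have e2 := hYhs b t le_rfl hbt htc
      have e3 := hYd s b hs hsb le_rfl
      have e4 := hX1 b t (by linarith) hbt htc
      have hbs0 : (0:ℝ) ≤ b - s := by linarith
      have htb0 : (0:ℝ) ≤ t - b := by linarith
      have hA : (b - s) ^ (2*α) ≤ (t - s) ^ (2*α) :=
        Real.rpow_le_rpow hbs0 (by linarith) (by linarith)
      have hB : (t - b) ^ (2*α) ≤ (t - s) ^ (2*α) :=
        Real.rpow_le_rpow htb0 (by linarith) (by linarith)
      have hP : (b - s) ^ α * (t - b) ^ α ≤ (t - s) ^ (2*α) := by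
        have h1 : (b - s) ^ α ≤ (t - s) ^ α :=
          Real.rpow_le_rpow hbs0 (by linarith) hα0.le
        have h2 : (t - b) ^ α ≤ (t - s) ^ α :=
          Real.rpow_le_rpow htb0 (by linarith) hα0.le
        have h3 : (t - s) ^ α * (t - s) ^ α = (t - s) ^ (2*α) := by
          rw [← Real.rpow_add' (by linarith) (by positivity)]
          ring_nf
        calc (b - s) ^ α * (t - b) ^ α ≤ (t - s) ^ α * (t - s) ^ α := by
              apply mul_le_mul h1 h2 (Real.rpow_nonneg htb0 _) (Real.rpow_nonneg (by linarith) _)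
          _ = (t - s) ^ (2*α) := h3
      have hop : ‖(Ydag b - Ydag s) (X1 b t)‖ ≤ ‖Ydag b - Ydag s‖ * ‖X1 b t‖ :=
        (Ydag b - Ydag s).le_opNorm (X1 b t)
      calc ‖Ysharp s b + Yhatsharp b t + (Ydag b - Ydag s) (X1 b t)‖
          ≤ ‖Ysharp s b‖ + ‖Yhatsharp b t‖ + ‖(Ydag b - Ydag s) (X1 b t)‖ := by
            exact (norm_add_le _ _).trans (by gcongr; exact norm_add_le _ _)
        _ ≤ (CYs + CYhs + CYd * CX1) * (t - s) ^ (2*α) := by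
            have hmul : ‖Ydag b - Ydag s‖ * ‖X1 b t‖
                ≤ (CYd * (b - s) ^ α) * (CX1 * (t - b) ^ α) :=
              mul_le_mul e3 e4 (norm_nonneg _)
                (mul_nonneg hCYd (Real.rpow_nonneg hbs0 _))
            have hA' := mul_le_mul_of_nonneg_left hA hCYs
            have hB' := mul_le_mul_of_nonneg_left hB hCYhs
            have hP' := mul_le_mul_of_nonneg_left hP (mul_nonneg hCYd hCX1)
            have h4 : ‖(Ydag b - Ydag s) (X1 b t)‖
                ≤ CYd * CX1 * ((b - s) ^ α * (t - b) ^ α) := by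
              have := hop.trans hmul; linarith [this, (by ring :
                (CYd * (b - s) ^ α) * (CX1 * (t - b) ^ α)
                  = CYd * CX1 * ((b - s) ^ α * (t - b) ^ α))]
            linarith [e1.trans hA', e2.trans hB', h4.trans hP',
              (by ring : (CYs + CYhs + CYd * CX1) * (t - s) ^ (2*α)
                = CYs * (t - s) ^ (2*α) + CYhs * (t - s) ^ (2*α)
                  + CYd * CX1 * (t - s) ^ (2*α))]
    · -- both in [b,c]
      have hbs : b < s := lt_of_not_ge hsb
      rw [hZ, hZ, hZdag, if_neg (not_le.mpr (hbs.trans_le hst)), if_neg hsb, if_neg hsb]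
      have h1 := hCtrlHat s t hbs.le hst htc
      have : Yhat t - Yhat s - Yhatdag s (X1 s t) = Yhatsharp s t := by rw [h1]; abel
      rw [this]
      have h2 := hYhs s t hbs.le hst htc
      have h3 : 0 ≤ (CYs + CYd * CX1) * ((t - s) ^ (2*α)) :=
        mul_nonneg (add_nonneg hCYs (mul_nonneg hCYd hCX1)) hD
      linarith [h2, h3, (by ring : (CYs + CYhs + CYd * CX1) * ((t - s) ^ (2*α))
        = CYhs * ((t - s) ^ (2*α)) + (CYs + CYd * CX1) * ((t - s) ^ (2*α)))]
end

section
/- Let G : [0,T] → ℝ^m be bounded with ‖G_t − G_s‖ ≤ K for all s,t (e.g. G_t = ∫₀ᵗ φ_s ds with ‖φ‖_∞ ≤ M, so |G_t − G_s| ≤ M(t−s)), δ ∈ (0,T], and 1/2 < γ < 1. Set G¹_{s,t} = G_t − G_s. If (i) |G¹_{s,t}| ≤ M(t−s) for all s ≤ t (Lipschitz) and (ii) for each k, |G¹_{kδ,(k+1)δ}| ≤ A_k, then for t − s > 2δ one has |G¹_{s,t}|²/(t−s)^{2γ} ≤ c(M²δ^{2(1−γ)} + δ^{−2γ} Σ_{k=0}^{⌊T/δ⌋−1}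 A_k²), and for 0 < t − s ≤ 2δ one has |G¹_{s,t}| ≤ M(2δ)^{1−γ}(t−s)^γ; hence ‖G‖_γ² ≤ c'(M²δ^{2(1−γ)} + δ^{−2γ}Σ_k A_k²) for a constant c' depending only on γ and T. -/
/-!
On an interval of length at most `2δ` the Lipschitz bound alone suffices, since
`M (t - s) ≤ M (2δ)^(1-γ) (t - s)^γ`. A longer interval `[s, t]` is cut at the grid points
`⌈s/δ⌉δ ≤ ⌊t/δ⌋δ` into two end pieces of length at most `δ` and at most `(t - s)/δ` grid
intervals, so Cauchy–Schwarz gives `|G t - G s|² ≤ 8 M² δ² + 2 ((t - s)/δ) ∑ A_k²`. As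
`δ ≤ t - s` and `2γ ≥ 1`, dividing by `(t - s)^(2γ)` turns `δ²` into at most `δ^(2(1-γ))` and
`(t - s)/δ` into at most `δ^(-2γ)`; hence `c' = 8`.
-/

open Finset Real

theorem le_rpow_one_sub_mul_rpow {x h γ : ℝ} (hx : 0 < x) (hxh : x ≤ h) (hγ : γ ≤ 1) :
    x ≤ h ^ (1 - γ) * x ^ γ :=
  calc x = x ^ (1 - γ) * x ^ γ := by rw [← rpow_add hx, sub_add_cancel, rpow_one]
    _ ≤ h ^ (1 - γ) * x ^ γ := by gcongr

theorem rpow_mul_rpow_le_rpow_mul_rpow {δ ℓ a b c : ℝ} (hδ : 0 < δ) (hδℓ : δ ≤ ℓ)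
    (hbc : b ≤ c) : δ ^ a * ℓ ^ b ≤ δ ^ (a + b - c) * ℓ ^ c := by
  have hℓ : 0 < ℓ := hδ.trans_le hδℓ
  calc δ ^ a * ℓ ^ b = δ ^ a * ℓ ^ (b - c) * ℓ ^ c := by
        rw [mul_assoc, ← rpow_add hℓ, sub_add_cancel]
    _ ≤ δ ^ a * δ ^ (b - c) * ℓ ^ c := by
        have := rpow_le_rpow_of_nonpos hδ hδℓ (sub_nonpos.mpr hbc : b - c ≤ 0)
        gcongr
    _ = δ ^ (a + b - c) * ℓ ^ c := by rw [← rpow_add hδ, add_sub_assoc]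

theorem sq_div_rpow_le_sq_of_le_mul_rpow {x c ℓ γ : ℝ} (hx : 0 ≤ x) (hℓ : 0 < ℓ)
    (h : x ≤ c * ℓ ^ γ) : x ^ 2 / ℓ ^ (2 * γ) ≤ c ^ 2 := by
  have hpow : ℓ ^ (2 * γ) = (ℓ ^ γ) ^ 2 := by
    rw [mul_comm, rpow_mul hℓ.le, rpow_two]
  rw [div_le_iff₀ (rpow_pos_of_pos hℓ _), hpow, ← mul_pow]
  gcongr

theorem sq_mul_two_mul_rpow_one_sub_le {M δ γ : ℝ} (hδ : 0 < δ) (hγ : 0 ≤ γ) :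
    (M * (2 * δ) ^ (1 - γ)) ^ 2 ≤ 4 * (M ^ 2 * δ ^ (2 * (1 - γ))) := by
  have htwo : (2 : ℝ) ^ (2 * (1 - γ)) ≤ 4 :=
    calc (2 : ℝ) ^ (2 * (1 - γ)) ≤ 2 ^ (2 : ℝ) :=
          rpow_le_rpow_of_exponent_le one_le_two (by linarith)
      _ = 4 := by norm_num
  calc (M * (2 * δ) ^ (1 - γ)) ^ 2 = M ^ 2 * (2 ^ (2 * (1 - γ)) * δ ^ (2 * (1 - γ))) := by
        rw [mul_pow, ← mul_rpow two_pos.le hδ.le, ← rpow_mul_natCast (by positivity)]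
        ring_nf
    _ ≤ M ^ 2 * (4 * δ ^ (2 * (1 - γ))) := by gcongr
    _ = 4 * (M ^ 2 * δ ^ (2 * (1 - γ))) := by ring

theorem sq_sum_Ico_le_div_mul_sum_range {A : ℕ → ℝ} {a b N : ℕ} {δ s t : ℝ} (hδ : 0 < δ)
    (hab : a ≤ b) (ha : s ≤ a * δ) (hb : b * δ ≤ t) (hbN : b ≤ N) :
    (∑ k ∈ Ico a b, A k) ^ 2 ≤ (t - s) / δ * ∑ k ∈ range N, A k ^ 2 := by
  have hcard : (#(Ico a b) : ℝ) ≤ (t - s) / δ := by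
    rw [Nat.card_Ico, Nat.cast_sub hab, le_div_iff₀ hδ, sub_mul]
    linarith
  have hsub : ∑ k ∈ Ico a b, A k ^ 2 ≤ ∑ k ∈ range N, A k ^ 2 :=
    sum_le_sum_of_subset_of_nonneg (fun k hk ↦ mem_range.mpr ((mem_Ico.mp hk).2.trans_le hbN))
      fun _ _ _ ↦ sq_nonneg _
  calc (∑ k ∈ Ico a b, A k) ^ 2 ≤ #(Ico a b) * ∑ k ∈ Ico a b, A k ^ 2 :=
        sq_sum_le_card_mul_sum_sq
    _ ≤ (t - s) / δ * ∑ k ∈ range N, A k ^ 2 :=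
        mul_le_mul hcard hsub (sum_nonneg fun _ _ ↦ sq_nonneg _) ((Nat.cast_nonneg _).trans hcard)

section GridFloorCeil

variable {δ : ℝ}

theorem le_natCeil_div_mul (hδ : 0 < δ) (x : ℝ) : x ≤ ⌈x / δ⌉₊ * δ := by
  rw [← div_le_iff₀ hδ]; exact Nat.le_ceil _

theorem natCeil_div_mul_lt_add (hδ : 0 < δ) {x : ℝ} (hx : 0 ≤ x) : ⌈x / δ⌉₊ * δ < x + δ := by
  have := mul_lt_mul_of_pos_right (Nat.ceil_lt_add_one (div_nonneg hx hδ.le)) hδ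
  rwa [add_mul, div_mul_cancel₀ _ hδ.ne', one_mul] at this

theorem natFloor_div_mul_le (hδ : 0 < δ) {x : ℝ} (hx : 0 ≤ x) : ⌊x / δ⌋₊ * δ ≤ x := by
  rw [← le_div_iff₀ hδ]; exact Nat.floor_le (div_nonneg hx hδ.le)

theorem lt_natFloor_div_add_one_mul (hδ : 0 < δ) (x : ℝ) : x < (⌊x / δ⌋₊ + 1) * δ := by
  rw [← div_lt_iff₀ hδ]; exact Nat.lt_floor_add_one _

theorem natCeil_div_le_natFloor_div (hδ : 0 < δ) {s t : ℝ} (hs : 0 ≤ s) (hδst : δ ≤ t - s) :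
    ⌈s / δ⌉₊ ≤ ⌊t / δ⌋₊ := by
  have : (⌈s / δ⌉₊ : ℝ) < ⌊t / δ⌋₊ + 1 := lt_of_mul_lt_mul_right
    (by linarith [natCeil_div_mul_lt_add hδ hs, lt_natFloor_div_add_one_mul hδ t]) hδ.le
  exact Nat.lt_succ_iff.mp (by exact_mod_cast this)

end GridFloorCeil

section GridDecomposition

variable {E : Type*} [SeminormedAddCommGroup E] {G : ℝ → E} {T M δ s t : ℝ} {A : ℕ → ℝ}

theorem norm_sub_le_sum_grid_increments {a b : ℕ} (hab : a ≤ b) :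
    ‖G (b * δ) - G (a * δ)‖ ≤ ∑ k ∈ Ico a b, ‖G ((k + 1) * δ) - G (k * δ)‖ := by
  rw [← dist_eq_norm, dist_comm]
  simpa [dist_eq_norm, norm_sub_rev] using dist_le_Ico_sum_dist (fun k : ℕ ↦ G (k * δ)) hab

theorem norm_sub_le_two_mul_add_sum_grid (hM : 0 ≤ M) (hδ : 0 < δ)
    (hLip : ∀ s t : ℝ, 0 ≤ s → s ≤ t → t ≤ T → ‖G t - G s‖ ≤ M * (t - s))
    (hGrid : ∀ k : ℕ, ((k : ℝ) + 1) * δ ≤ T →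
      ‖G (((k : ℝ) + 1) * δ) - G ((k : ℝ) * δ)‖ ≤ A k)
    (hs : 0 ≤ s) (hδst : δ ≤ t - s) (htT : t ≤ T) :
    ‖G t - G s‖ ≤ 2 * (M * δ) + ∑ k ∈ Ico ⌈s / δ⌉₊ ⌊t / δ⌋₊, A k := by
  set a := ⌈s / δ⌉₊
  set b := ⌊t / δ⌋₊
  have ha : s ≤ a * δ := le_natCeil_div_mul hδ s
  have ha' : a * δ < s + δ := natCeil_div_mul_lt_add hδ hs
  have hb : b * δ ≤ t := natFloor_div_mul_le hδ (by linarith)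
  have hb' : t < (b + 1) * δ := lt_natFloor_div_add_one_mul hδ t
  have hab : a ≤ b := natCeil_div_le_natFloor_div hδ hs hδst
  have hend : ‖G t - G (b * δ)‖ ≤ M * δ :=
    (hLip _ t (by positivity) hb htT).trans (by nlinarith)
  have hstart : ‖G (a * δ) - G s‖ ≤ M * δ :=
    (hLip s _ hs ha (by linarith)).trans (by nlinarith)
  have hmiddle : ‖G (b * δ) - G (a * δ)‖ ≤ ∑ k ∈ Ico a b, A k := by
    refine norm_sub_le_sum_grid_increments hab |>.trans (sum_le_sum fun k hk ↦ hGrid k ?_)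
    have : (k : ℝ) + 1 ≤ b := by exact_mod_cast (mem_Ico.mp hk).2
    nlinarith
  linarith [norm_sub_le_norm_sub_add_norm_sub (G t) (G (b * δ)) (G s),
    norm_sub_le_norm_sub_add_norm_sub (G (b * δ)) (G (a * δ)) (G s)]

theorem sq_norm_sub_div_rpow_le_of_le_sub {γ : ℝ} (hM : 0 ≤ M) (hδ : 0 < δ) (hγ : 1 / 2 ≤ γ)
    (hLip : ∀ s t : ℝ, 0 ≤ s → s ≤ t → t ≤ T → ‖G t - G s‖ ≤ M * (t - s))
    (hGrid : ∀ k : ℕ, ((k : ℝ) + 1) * δ ≤ T →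
      ‖G (((k : ℝ) + 1) * δ) - G ((k : ℝ) * δ)‖ ≤ A k)
    (hs : 0 ≤ s) (hδst : δ ≤ t - s) (htT : t ≤ T) :
    ‖G t - G s‖ ^ 2 / (t - s) ^ (2 * γ)
      ≤ 8 * (M ^ 2 * δ ^ (2 * (1 - γ)) + δ ^ (-(2 * γ)) * ∑ k ∈ range ⌊T / δ⌋₊, A k ^ 2) := by
  set sumSq := ∑ k ∈ range ⌊T / δ⌋₊, A k ^ 2
  set S := ∑ k ∈ Ico ⌈s / δ⌉₊ ⌊t / δ⌋₊, A k
  have hsumSq : 0 ≤ sumSq := sum_nonneg fun _ _ ↦ sq_nonneg _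
  have hℓ : 0 < t - s := hδ.trans_le hδst
  have hsplit := norm_sub_le_two_mul_add_sum_grid hM hδ hLip hGrid hs hδst htT
  have hCS : S ^ 2 ≤ (t - s) / δ * sumSq :=
    sq_sum_Ico_le_div_mul_sum_range hδ (natCeil_div_le_natFloor_div hδ hs hδst)
      (le_natCeil_div_mul hδ s) (natFloor_div_mul_le hδ (by linarith))
      (Nat.floor_le_floor (div_le_div_of_nonneg_right htT hδ.le))
  have hsq : ‖G t - G s‖ ^ 2 ≤ 8 * M ^ 2 * δ ^ 2 + 2 * ((t - s) / δ * sumSq) := by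
    nlinarith [norm_nonneg (G t - G s), sq_nonneg (2 * (M * δ) - S)]
  have hboundary : δ ^ 2 ≤ δ ^ (2 * (1 - γ)) * (t - s) ^ (2 * γ) := by
    have := rpow_mul_rpow_le_rpow_mul_rpow (a := 2) hδ hδst (by linarith : (0 : ℝ) ≤ 2 * γ)
    rwa [rpow_zero, mul_one, rpow_two, show (2 : ℝ) + 0 - 2 * γ = 2 * (1 - γ) by ring] at this
  have hcount : (t - s) / δ ≤ δ ^ (-(2 * γ)) * (t - s) ^ (2 * γ) := by
    have := rpow_mul_rpow_le_rpow_mul_rpow (a := -1) hδ hδst (by linarith : (1 : ℝ) ≤ 2 * γ)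
    rwa [rpow_neg_one, rpow_one, inv_mul_eq_div, show (-1 : ℝ) + 1 - 2 * γ = -(2 * γ) by ring]
      at this
  rw [div_le_iff₀ (rpow_pos_of_pos hℓ _)]
  calc ‖G t - G s‖ ^ 2 ≤ 8 * M ^ 2 * δ ^ 2 + 2 * ((t - s) / δ * sumSq) := hsq
    _ ≤ 8 * M ^ 2 * (δ ^ (2 * (1 - γ)) * (t - s) ^ (2 * γ))
        + 2 * (δ ^ (-(2 * γ)) * (t - s) ^ (2 * γ) * sumSq) := by gcongr
    _ ≤ 8 * (M ^ 2 * δ ^ (2 * (1 - γ)) + δ ^ (-(2 * γ)) * sumSq) * (t - s) ^ (2 * γ) := by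
        have : 0 ≤ δ ^ (-(2 * γ)) * (t - s) ^ (2 * γ) * sumSq := by positivity
        linarith

end GridDecomposition

theorem khasminskii_holder_discretization_bound_general
    {V : Type*} [NormedAddCommGroup V]
    (T γ : ℝ) (hγ1 : 1/2 < γ) (hγ2 : γ < 1) :
    ∃ c' : ℝ, 0 < c' ∧
      ∀ (G : ℝ → V) (M δ : ℝ) (A : ℕ → ℝ),
        0 ≤ M → 0 < δ → δ ≤ T → (∀ k, 0 ≤ A k) →
        -- (i) the Lipschitz bound
        (∀ s t : ℝ, 0 ≤ s → s ≤ t → t ≤ T → ‖G t - G s‖ ≤ M * (t - s)) →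
        -- (ii) the grid increment bounds
        (∀ k : ℕ, ((k : ℝ) + 1) * δ ≤ T →
          ‖G (((k : ℝ) + 1) * δ) - G ((k : ℝ) * δ)‖ ≤ A k) →
        -- short intervals
        (∀ s t : ℝ, 0 ≤ s → s < t → t ≤ T → t - s ≤ 2 * δ →
          ‖G t - G s‖ ≤ M * (2 * δ) ^ (1 - γ) * (t - s) ^ γ)
        -- long intervals
        ∧ (∀ s t : ℝ, 0 ≤ s → s < t → t ≤ T → 2 * δ < t - s →
            ‖G t - G s‖ ^ 2 / (t - s) ^ (2 * γ)
              ≤ c' * (M ^ 2 * δ ^ (2 * (1 - γ))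
                + δ ^ (-(2 * γ)) * ∑ k ∈ range ⌊T / δ⌋₊, (A k) ^ 2))
        -- the Hölder seminorm bound
        ∧ (∀ s t : ℝ, 0 ≤ s → s < t → t ≤ T →
            ‖G t - G s‖ ^ 2 / (t - s) ^ (2 * γ)
              ≤ c' * (M ^ 2 * δ ^ (2 * (1 - γ))
                + δ ^ (-(2 * γ)) * ∑ k ∈ range ⌊T / δ⌋₊, (A k) ^ 2)) := by
  refine ⟨8, by norm_num, fun G M δ A hM hδ _ _ hLip hGrid ↦ ?_⟩
  have hshort : ∀ s t : ℝ, 0 ≤ s → s < t → t ≤ T → t - s ≤ 2 * δ →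
      ‖G t - G s‖ ≤ M * (2 * δ) ^ (1 - γ) * (t - s) ^ γ := fun s t hs hst htT h ↦
    (hLip s t hs hst.le htT).trans <| by
      rw [mul_assoc]
      exact mul_le_mul_of_nonneg_left (le_rpow_one_sub_mul_rpow (sub_pos.2 hst) h hγ2.le) hM
  have hlong : ∀ s t : ℝ, 0 ≤ s → s < t → t ≤ T → 2 * δ < t - s →
      ‖G t - G s‖ ^ 2 / (t - s) ^ (2 * γ)
        ≤ 8 * (M ^ 2 * δ ^ (2 * (1 - γ)) + δ ^ (-(2 * γ)) * ∑ k ∈ range ⌊T / δ⌋₊, A k ^ 2) :=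
    fun s t hs _ htT h ↦
      sq_norm_sub_div_rpow_le_of_le_sub hM hδ hγ1.le hLip hGrid hs (by linarith) htT
  refine ⟨hshort, hlong, fun s t hs hst htT ↦ ?_⟩
  rcases lt_or_ge (2 * δ) (t - s) with h | h
  · exact hlong s t hs hst htT h
  · have : 0 ≤ δ ^ (-(2 * γ)) * ∑ k ∈ range ⌊T / δ⌋₊, A k ^ 2 := by positivity
    have : 0 ≤ M ^ 2 * δ ^ (2 * (1 - γ)) := by positivity
    calc ‖G t - G s‖ ^ 2 / (t - s) ^ (2 * γ) ≤ (M * (2 * δ) ^ (1 - γ)) ^ 2 :=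
          sq_div_rpow_le_sq_of_le_mul_rpow (norm_nonneg _) (sub_pos.2 hst)
            (hshort s t hs hst htT h)
      _ ≤ 4 * (M ^ 2 * δ ^ (2 * (1 - γ))) := sq_mul_two_mul_rpow_one_sub_le hδ (by linarith)
      _ ≤ _ := by linarith

/-- Key deterministic estimate in the Khas'minskii discretization (Lemma 5.3):
if `G` is Lipschitz with constant `M` on `[0,T]` and its increments over the
grid intervals `[kδ, (k+1)δ]` are bounded by `A k`, then for `1/2 < γ < 1`
there is a constant `c'` depending only on `γ` and `T` such that
* for `0 < t − s ≤ 2δ`:  `|G¹_{s,t}| ≤ M (2δ)^{1−γ} (t−s)^γ`,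
* for `t − s > 2δ`:
  `|G¹_{s,t}|²/(t−s)^{2γ} ≤ c'(M² δ^{2(1−γ)} + δ^{−2γ} Σ_{k<⌊T/δ⌋} A_k²)`,
* hence `‖G‖_γ² ≤ c'(M² δ^{2(1−γ)} + δ^{−2γ} Σ_{k<⌊T/δ⌋} A_k²)`. -/
theorem khasminskii_holder_discretization_bound
    {V : Type*} [NormedAddCommGroup V] [NormedSpace ℝ V]
    (T γ : ℝ) (hT : 0 < T) (hγ1 : 1/2 < γ) (hγ2 : γ < 1) :
    ∃ c' : ℝ, 0 < c' ∧
      ∀ (G : ℝ → V) (M δ : ℝ) (A : ℕ → ℝ),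
        0 ≤ M → 0 < δ → δ ≤ T → (∀ k, 0 ≤ A k) →
        -- (i) the Lipschitz bound
        (∀ s t : ℝ, 0 ≤ s → s ≤ t → t ≤ T → ‖G t - G s‖ ≤ M * (t - s)) →
        -- (ii) the grid increment bounds
        (∀ k : ℕ, ((k : ℝ) + 1) * δ ≤ T →
          ‖G (((k : ℝ) + 1) * δ) - G ((k : ℝ) * δ)‖ ≤ A k) →
        -- short intervals
        (∀ s t : ℝ, 0 ≤ s → s < t → t ≤ T → t - s ≤ 2 * δ →
          ‖G t - G s‖ ≤ M * (2 * δ) ^ (1 - γ) * (t - s) ^ γ)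
        -- long intervals
        ∧ (∀ s t : ℝ, 0 ≤ s → s < t → t ≤ T → 2 * δ < t - s →
            ‖G t - G s‖ ^ 2 / (t - s) ^ (2 * γ)
              ≤ c' * (M ^ 2 * δ ^ (2 * (1 - γ))
                + δ ^ (-(2 * γ)) * ∑ k ∈ range ⌊T / δ⌋₊, (A k) ^ 2))
        -- the Hölder seminorm bound
        ∧ (∀ s t : ℝ, 0 ≤ s → s < t → t ≤ T →
            ‖G t - G s‖ ^ 2 / (t - s) ^ (2 * γ)
              ≤ c' * (M ^ 2 * δ ^ (2 * (1 - γ))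
                + δ ^ (-(2 * γ)) * ∑ k ∈ range ⌊T / δ⌋₊, (A k) ^ 2)) :=
  khasminskii_holder_discretization_bound_general T γ hγ1 hγ2
end
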